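/- arXiv:1812.10207 — 14 statements merged into one kernel-verified Lean document; each statement's English description precedes it below -/
import Mathlib

section
/- Let (γ,ν): I → ℝ² × S¹ be a Legendre curve with γ(t)=(x(t),z(t)), ν(t)=(a(t),b(t)) and curvature (ℓ,β). Define the surface of revolution around the x-axis 𝐱(t,θ)=(x(t), z(t)cosθ, z(t)sinθ) together with 𝐧ˣ(t,θ)=(−a(t), −b(t)cosθ, −b(t)sinθ) and 𝐬ˣ(t,θ)=(0, sinθ, −cosθ). Then (𝐱,𝐧ˣ,𝐬ˣ) is a framed surface, and with 𝐭ˣ = 𝐧ˣ × 𝐬ˣ = (b(t), −a(t)cosθ, −a(t)sinθ) one has 𝐱_t = −β(t)𝐭ˣ, 𝐱_θ = −z(t)𝐬ˣ, 𝐧ˣ_t = ℓ(t)𝐭ˣ, 𝐧ˣ_θ = b(t)𝐬ˣ, 𝐬ˣ_t = 0, 𝐬ˣ_θ = −b(t)𝐧ˣ − a(t)𝐭ˣ; that is, its basic invariants are a₁=0, b₁=−β, a₂=−z, b₂=0, e₁=0, f₁=ℓ, g₁=0, e₂=b, f₂=0, g₂=−a. -/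
open Matrix Real

/-!
Write `R_θ (p, q) = (p, q cos θ, q sin θ)` for the rotation of a point of the `xz`-plane about
the `x`-axis. Then `X`, `N`, `T` are the rotations of the planar curve `(x, z)`, of `-ν = (-a, -b)`
and of `(b, -a)`, while `S` is the unit tangent to the parallels, with `∂_θ R_θ (p, q) = -q S`.
Since `R_θ` is a linear isometry of the plane onto the plane orthogonal to `S`, dot products,
the cross product with `S` and `t`-derivatives all reduce to the planar ones, where the
Legendre equations `ẋ = -βb`, `ż = βa`, `ȧ = -ℓb`, `ḃ = ℓa` and `a² + b² = 1` finish the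
computation.
-/

theorem HasDerivAt.vecCons₃ {𝕜 E : Type*} [NontriviallyNormedField 𝕜] [NormedAddCommGroup E]
    [NormedSpace 𝕜 E] {f g h : 𝕜 → E} {f' g' h' : E} {t : 𝕜}
    (hf : HasDerivAt f f' t) (hg : HasDerivAt g g' t) (hh : HasDerivAt h h' t) :
    HasDerivAt (fun s => ![f s, g s, h s]) ![f', g', h'] t :=
  hf.finCons <| hg.finCons <| hh.finCons <|
    (hasDerivAt_const t ![]).congr_deriv (Subsingleton.elim _ _)

noncomputable def revolveX (p q θ : ℝ) : Fin 3 → ℝ := ![p, q * cos θ, q * sin θ]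

noncomputable def parallelDirX (θ : ℝ) : Fin 3 → ℝ := ![0, sin θ, -cos θ]

section revolveX

variable (p q p' q' c θ : ℝ)

theorem smul_revolveX : c • revolveX p q θ = revolveX (c * p) (c * q) θ := by
  ext i; fin_cases i <;> simp [revolveX, mul_assoc]

theorem revolveX_add_revolveX :
    revolveX p q θ + revolveX p' q' θ = revolveX (p + p') (q + q') θ := by
  ext i; fin_cases i <;> simp [revolveX] <;> ring

theorem revolveX_dotProduct_revolveX :
    revolveX p q θ ⬝ᵥ revolveX p' q' θ = p * p' + q * q' := by
  simp [revolveX, dotProduct, Fin.sum_univ_three]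
  linear_combination q * q' * sin_sq_add_cos_sq θ

theorem revolveX_dotProduct_parallelDirX : revolveX p q θ ⬝ᵥ parallelDirX θ = 0 := by
  simp [revolveX, parallelDirX, dotProduct, Fin.sum_univ_three]
  ring

theorem parallelDirX_dotProduct_self : parallelDirX θ ⬝ᵥ parallelDirX θ = 1 := by
  simp [parallelDirX, dotProduct, Fin.sum_univ_three]
  linear_combination sin_sq_add_cos_sq θ

theorem revolveX_cross_parallelDirX :
    crossProduct (revolveX p q θ) (parallelDirX θ) = revolveX (-q) p θ := by
  ext i; fin_cases i <;> simp [revolveX, parallelDirX, cross_apply]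
  linear_combination (-q) * sin_sq_add_cos_sq θ

theorem hasDerivAt_revolveX_angle : HasDerivAt (revolveX p q) (-q • parallelDirX θ) θ := by
  refine ((hasDerivAt_const θ p).vecCons₃ ((hasDerivAt_cos θ).const_mul q)
    ((hasDerivAt_sin θ).const_mul q)).congr_deriv ?_
  ext i; fin_cases i <;> simp [parallelDirX]

theorem hasDerivAt_parallelDirX : HasDerivAt parallelDirX (revolveX 0 1 θ) θ := by
  refine ((hasDerivAt_const θ (0 : ℝ)).vecCons₃ (hasDerivAt_sin θ)
    (hasDerivAt_cos θ).neg).congr_deriv ?_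
  ext i; fin_cases i <;> simp [revolveX]

end revolveX

theorem HasDerivAt.revolveX {p q : ℝ → ℝ} {p' q' t : ℝ} (hp : HasDerivAt p p' t)
    (hq : HasDerivAt q q' t) (θ : ℝ) :
    HasDerivAt (fun s => revolveX (p s) (q s) θ) (revolveX p' q' θ) t :=
  hp.vecCons₃ (hq.mul_const _) (hq.mul_const _)

/-- For a Legendre curve `(γ, ν)` with `γ = (x, z)`, `ν = (a, b)` and
curvature `(ℓ, β)` (so `ẋ = -βb`, `ż = βa`, `ȧ = -ℓb`, `ḃ = ℓa`, `a² + b² = 1`),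
the surface of revolution around the x-axis `X(t,θ) = (x t, z t cos θ, z t sin θ)`
together with `N = (-a, -b cos θ, -b sin θ)` and `S = (0, sin θ, -cos θ)` is a framed
surface with `T = N ×₃ S = (b, -a cos θ, -a sin θ)`, and its basic invariants are
`a₁ = 0, b₁ = -β, a₂ = -z, b₂ = 0, e₁ = 0, f₁ = ℓ, g₁ = 0, e₂ = b, f₂ = 0, g₂ = -a`. -/
theorem surface_of_revolution_x_axis_is_framed_surface
    (x z a b ℓ β : ℝ → ℝ)
    (hx : ContDiff ℝ (⊤ : ℕ∞) x) (hz : ContDiff ℝ (⊤ : ℕ∞) z)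
    (ha : ContDiff ℝ (⊤ : ℕ∞) a) (hb : ContDiff ℝ (⊤ : ℕ∞) b)
    (hunit : ∀ t, a t ^ 2 + b t ^ 2 = 1)
    (hdx : ∀ t, deriv x t = -(β t) * b t)
    (hdz : ∀ t, deriv z t = β t * a t)
    (hda : ∀ t, deriv a t = -(ℓ t) * b t)
    (hdb : ∀ t, deriv b t = ℓ t * a t)
    (X N S T : ℝ → ℝ → Fin 3 → ℝ)
    (hX : ∀ t θ, X t θ = ![x t, z t * cos θ, z t * sin θ])
    (hN : ∀ t θ, N t θ = ![-(a t), -(b t) * cos θ, -(b t) * sin θ])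
    (hS : ∀ t θ, S t θ = ![0, sin θ, -cos θ])
    (hT : ∀ t θ, T t θ = ![b t, -(a t) * cos θ, -(a t) * sin θ]) :
    ∀ t θ : ℝ,
      -- (N, S) takes values in Δ, i.e. (X, N, S) maps into ℝ³ × Δ
      (N t θ ⬝ᵥ N t θ = 1 ∧ S t θ ⬝ᵥ S t θ = 1 ∧ N t θ ⬝ᵥ S t θ = 0) ∧
      -- T = N ×₃ S
      crossProduct (N t θ) (S t θ) = T t θ ∧
      -- (X, N, S) is a framed surface: X_t ⬝ N = X_θ ⬝ N = 0
      (deriv (fun s => X s θ) t ⬝ᵥ N t θ = 0 ∧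
        deriv (fun θ' => X t θ') θ ⬝ᵥ N t θ = 0) ∧
      -- X_t = 0 • S + (-β) • T  (a₁ = 0, b₁ = -β)
      HasDerivAt (fun s => X s θ) ((0 : ℝ) • S t θ + (-(β t)) • T t θ) t ∧
      -- X_θ = (-z) • S + 0 • T  (a₂ = -z, b₂ = 0)
      HasDerivAt (fun θ' => X t θ') ((-(z t)) • S t θ + (0 : ℝ) • T t θ) θ ∧
      -- N_t = 0 • S + ℓ • T  (e₁ = 0, f₁ = ℓ)
      HasDerivAt (fun s => N s θ) ((0 : ℝ) • S t θ + (ℓ t) • T t θ) t ∧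
      -- N_θ = b • S + 0 • T  (e₂ = b, f₂ = 0)
      HasDerivAt (fun θ' => N t θ') ((b t) • S t θ + (0 : ℝ) • T t θ) θ ∧
      -- S_t = -0 • N + 0 • T  (g₁ = 0)
      HasDerivAt (fun s => S s θ) (-(0 : ℝ) • N t θ + (0 : ℝ) • T t θ) t ∧
      -- S_θ = (-b) • N + (-a) • T  (g₂ = -a)
      HasDerivAt (fun θ' => S t θ') ((-(b t)) • N t θ + (-(a t)) • T t θ) θ := by
  intro t θ
  have hasDerivAt_of_deriv {f : ℝ → ℝ} (hf : ContDiff ℝ (⊤ : ℕ∞) f) {f' : ℝ}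
      (h : deriv f t = f') : HasDerivAt f f' t :=
    h ▸ (hf.differentiable (by simp) t).hasDerivAt
  obtain rfl : X = fun t => revolveX (x t) (z t) := funext₂ hX
  obtain rfl : N = fun t => revolveX (-a t) (-b t) := funext₂ hN
  obtain rfl : S = fun _ => parallelDirX := funext₂ hS
  obtain rfl : T = fun t => revolveX (b t) (-a t) := funext₂ hT
  have hSN : parallelDirX θ ⬝ᵥ revolveX (-a t) (-b t) θ = 0 := by
    rw [dotProduct_comm, revolveX_dotProduct_parallelDirX]
  have hTN : revolveX (b t) (-a t) θ ⬝ᵥ revolveX (-a t) (-b t) θ = 0 := by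
    rw [revolveX_dotProduct_revolveX]; ring
  have hXt : HasDerivAt (fun s => revolveX (x s) (z s) θ)
      ((0 : ℝ) • parallelDirX θ + (-β t) • revolveX (b t) (-a t) θ) t := by
    refine ((hasDerivAt_of_deriv hx (hdx t)).revolveX
      (hasDerivAt_of_deriv hz (hdz t)) θ).congr_deriv ?_
    rw [zero_smul, zero_add, smul_revolveX]; congr 1; ring
  have hXθ : HasDerivAt (revolveX (x t) (z t))
      ((-z t) • parallelDirX θ + (0 : ℝ) • revolveX (b t) (-a t) θ) θ :=
    (hasDerivAt_revolveX_angle (x t) (z t) θ).congr_deriv (by simp)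
  refine ⟨⟨?_, parallelDirX_dotProduct_self θ, revolveX_dotProduct_parallelDirX _ _ θ⟩,
    ?_, ⟨?_, ?_⟩, hXt, hXθ, ?_, ?_, ?_, ?_⟩
  · rw [revolveX_dotProduct_revolveX]; linear_combination hunit t
  · rw [revolveX_cross_parallelDirX, neg_neg]
  · simp [hXt.deriv, hTN]
  · simp [hXθ.deriv, hSN]
  · refine ((hasDerivAt_of_deriv ha (hda t)).neg.revolveX
      (hasDerivAt_of_deriv hb (hdb t)).neg θ).congr_deriv ?_
    rw [zero_smul, zero_add, smul_revolveX]; congr 1 <;> ring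
  · exact (hasDerivAt_revolveX_angle _ _ θ).congr_deriv (by simp)
  · exact (hasDerivAt_const t _).congr_deriv (by simp)
  · refine (hasDerivAt_parallelDirX θ).congr_deriv ?_
    rw [smul_revolveX, smul_revolveX, revolveX_add_revolveX]; congr 1
    · ring
    · linear_combination -hunit t
end

section
/- Let (γ,ν): I → ℝ² × S¹ be a Legendre curve with γ(t)=(x(t),z(t)), ν(t)=(a(t),b(t)) and curvature (ℓ,β). Define the surface of revolution around the z-axis 𝐳(t,θ)=(x(t)cosθ, x(t)sinθ, z(t)) together with 𝐧ᶻ(t,θ)=(a(t)cosθ, a(t)sinθ, b(t)) and 𝐬ᶻ(t,θ)=(sinθ, −cosθ, 0). Then (𝐳,𝐧ᶻ,𝐬ᶻ) is a framed surface, and with 𝐭ᶻ = 𝐧ᶻ × 𝐬ᶻ one has 𝐳_t = −β(t)𝐭ᶻ, 𝐳_θ = −x(t)𝐬ᶻ, 𝐧ᶻ_t = −ℓ(t)𝐭ᶻ, 𝐧ᶻ_θ = −a(t)𝐬ᶻ, 𝐬ᶻ_t = 0, 𝐬ᶻ_θ = a(t)𝐧ᶻ + b(t)𝐭ᶻ;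 that is, its basic invariants are a₁=0, b₁=−β, a₂=−x, b₂=0, e₁=0, f₁=−ℓ, g₁=0, e₂=−a, f₂=0, g₂=b. -/
open Matrix Real

/-! Rotation by `θ` about the z-axis maps the meridian plane `(p, 0, q)` isometrically onto a
plane orthogonal to `S`, and it commutes with `∂_t`. Hence `Z_t` and `N_t` are the rotated
`γ' = βμ` and `ν' = ℓμ`, and the rotated `μ = (-b, a)` is `-N × S = -T`. -/

noncomputable def revolve (p q θ : ℝ) : Fin 3 → ℝ := ![p * cos θ, p * sin θ, q]

noncomputable def parallelTangent (θ : ℝ) : Fin 3 → ℝ := ![sin θ, -cos θ, 0]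

lemma smul_revolve (c p q θ : ℝ) : c • revolve p q θ = revolve (c * p) (c * q) θ := by
  simp only [revolve, smul_vec3, smul_eq_mul, mul_assoc]

lemma revolve_dotProduct_revolve (p q p' q' θ : ℝ) :
    revolve p q θ ⬝ᵥ revolve p' q' θ = p * p' + q * q' := by
  rw [revolve, revolve, vec3_dotProduct']
  linear_combination (p * p') * sin_sq_add_cos_sq θ

lemma revolve_dotProduct_parallelTangent (p q θ : ℝ) :
    revolve p q θ ⬝ᵥ parallelTangent θ = 0 := by
  rw [revolve, parallelTangent, vec3_dotProduct']
  ring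

lemma parallelTangent_dotProduct_self (θ : ℝ) : parallelTangent θ ⬝ᵥ parallelTangent θ = 1 := by
  rw [parallelTangent, vec3_dotProduct']
  linear_combination sin_sq_add_cos_sq θ

lemma revolve_cross_parallelTangent (p q θ : ℝ) :
    crossProduct (revolve p q θ) (parallelTangent θ) = revolve q (-p) θ := by
  rw [cross_apply]
  simp only [revolve, parallelTangent, cons_val_zero, cons_val_one, cons_val]
  exact vec3_eq (by ring) (by ring) (by linear_combination -p * sin_sq_add_cos_sq θ)

lemma hasDerivAt_vecCons₃ {f g h : ℝ → ℝ} {f' g' h' t : ℝ}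
    (hf : HasDerivAt f f' t) (hg : HasDerivAt g g' t) (hh : HasDerivAt h h' t) :
    HasDerivAt (fun s => ![f s, g s, h s]) ![f', g', h'] t := by
  refine hasDerivAt_pi.mpr fun i => ?_
  fin_cases i <;> simpa

lemma HasDerivAt.revolve {p q : ℝ → ℝ} {p' q' t : ℝ} (hp : HasDerivAt p p' t)
    (hq : HasDerivAt q q' t) (θ : ℝ) :
    HasDerivAt (fun s => revolve (p s) (q s) θ) (revolve p' q' θ) t :=
  hasDerivAt_vecCons₃ (hp.mul_const _) (hp.mul_const _) hq

lemma hasDerivAt_revolve_of_deriv_eq {p q : ℝ → ℝ} {k u v t : ℝ} (hp : Differentiable ℝ p)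
    (hq : Differentiable ℝ q) (hdp : deriv p t = -k * v) (hdq : deriv q t = k * u) (θ : ℝ) :
    HasDerivAt (fun s => revolve (p s) (q s) θ) (-k • revolve v (-u) θ) t := by
  rw [smul_revolve, neg_mul_neg]
  exact ((hp t).hasDerivAt.congr_deriv hdp).revolve ((hq t).hasDerivAt.congr_deriv hdq) θ

lemma hasDerivAt_revolve_angle (p q θ : ℝ) :
    HasDerivAt (revolve p q) (-p • parallelTangent θ) θ := by
  refine (hasDerivAt_vecCons₃ ((hasDerivAt_cos θ).const_mul p) ((hasDerivAt_sin θ).const_mul p)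
    (hasDerivAt_const θ q)).congr_deriv ?_
  simp only [parallelTangent, smul_vec3, smul_eq_mul]
  exact vec3_eq (by ring) (by ring) (by ring)

lemma hasDerivAt_parallelTangent {a b : ℝ} (hab : a ^ 2 + b ^ 2 = 1) (θ : ℝ) :
    HasDerivAt parallelTangent (a • revolve a b θ + b • revolve b (-a) θ) θ := by
  refine (hasDerivAt_vecCons₃ (hasDerivAt_sin θ) (hasDerivAt_cos θ).fun_neg
    (hasDerivAt_const θ (0 : ℝ))).congr_deriv ?_
  simp only [revolve, smul_vec3, vec3_add, smul_eq_mul]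
  exact vec3_eq (by linear_combination -cos θ * hab) (by linear_combination -sin θ * hab) (by ring)

/-- For a Legendre curve `(γ, ν)` with `γ = (x, z)`, `ν = (a, b)` and
curvature `(ℓ, β)`, the surface of revolution around the z-axis
`Z(t,θ) = (x t cos θ, x t sin θ, z t)` together with `N = (a cos θ, a sin θ, b)` and
`S = (sin θ, -cos θ, 0)` is a framed surface with `T = N ×₃ S`, and its basic invariants
are `a₁ = 0, b₁ = -β, a₂ = -x, b₂ = 0, e₁ = 0, f₁ = -ℓ, g₁ = 0, e₂ = -a, f₂ = 0, g₂ = b`. -/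
theorem surface_of_revolution_z_axis_is_framed_surface
    (x z a b ℓ β : ℝ → ℝ)
    (hx : ContDiff ℝ (⊤ : ℕ∞) x) (hz : ContDiff ℝ (⊤ : ℕ∞) z)
    (ha : ContDiff ℝ (⊤ : ℕ∞) a) (hb : ContDiff ℝ (⊤ : ℕ∞) b)
    (hunit : ∀ t, a t ^ 2 + b t ^ 2 = 1)
    (hdx : ∀ t, deriv x t = -(β t) * b t)
    (hdz : ∀ t, deriv z t = β t * a t)
    (hda : ∀ t, deriv a t = -(ℓ t) * b t)
    (hdb : ∀ t, deriv b t = ℓ t * a t)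
    (Z N S T : ℝ → ℝ → Fin 3 → ℝ)
    (hZ : ∀ t θ, Z t θ = ![x t * cos θ, x t * sin θ, z t])
    (hN : ∀ t θ, N t θ = ![a t * cos θ, a t * sin θ, b t])
    (hS : ∀ t θ, S t θ = ![sin θ, -cos θ, 0])
    (hT : ∀ t θ, T t θ = crossProduct (N t θ) (S t θ)) :
    ∀ t θ : ℝ,
      -- (N, S) takes values in Δ, i.e. (Z, N, S) maps into ℝ³ × Δ
      (N t θ ⬝ᵥ N t θ = 1 ∧ S t θ ⬝ᵥ S t θ = 1 ∧ N t θ ⬝ᵥ S t θ = 0) ∧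
      -- (Z, N, S) is a framed surface: Z_t ⬝ N = Z_θ ⬝ N = 0
      (deriv (fun s => Z s θ) t ⬝ᵥ N t θ = 0 ∧
        deriv (fun θ' => Z t θ') θ ⬝ᵥ N t θ = 0) ∧
      -- Z_t = 0 • S + (-β) • T  (a₁ = 0, b₁ = -β)
      HasDerivAt (fun s => Z s θ) ((0 : ℝ) • S t θ + (-(β t)) • T t θ) t ∧
      -- Z_θ = (-x) • S + 0 • T  (a₂ = -x, b₂ = 0)
      HasDerivAt (fun θ' => Z t θ') ((-(x t)) • S t θ + (0 : ℝ) • T t θ) θ ∧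
      -- N_t = 0 • S + (-ℓ) • T  (e₁ = 0, f₁ = -ℓ)
      HasDerivAt (fun s => N s θ) ((0 : ℝ) • S t θ + (-(ℓ t)) • T t θ) t ∧
      -- N_θ = (-a) • S + 0 • T  (e₂ = -a, f₂ = 0)
      HasDerivAt (fun θ' => N t θ') ((-(a t)) • S t θ + (0 : ℝ) • T t θ) θ ∧
      -- S_t = -0 • N + 0 • T  (g₁ = 0)
      HasDerivAt (fun s => S s θ) (-(0 : ℝ) • N t θ + (0 : ℝ) • T t θ) t ∧
      -- S_θ = a • N + b • T  (e₂ = -a, g₂ = b)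
      HasDerivAt (fun θ' => S t θ') ((a t) • N t θ + (b t) • T t θ) θ := by
  have hT' : T = fun t θ => revolve (b t) (-a t) θ := funext₂ fun t θ => by
    rw [hT, ← revolve_cross_parallelTangent, hN, hS]; rfl
  obtain rfl : Z = fun t θ => revolve (x t) (z t) θ := funext₂ hZ
  obtain rfl : N = fun t θ => revolve (a t) (b t) θ := funext₂ hN
  obtain rfl : S = fun _ θ => parallelTangent θ := funext₂ hS
  subst hT'
  intro t θ
  have hZt := hasDerivAt_revolve_of_deriv_eq (hx.differentiable (by simp))
    (hz.differentiable (by simp)) (hdx t) (hdz t) θ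
  have hNt := hasDerivAt_revolve_of_deriv_eq (ha.differentiable (by simp))
    (hb.differentiable (by simp)) (hda t) (hdb t) θ
  simp only [zero_smul, zero_add, add_zero, neg_zero]
  refine ⟨⟨?_, parallelTangent_dotProduct_self θ, revolve_dotProduct_parallelTangent _ _ θ⟩,
    ⟨?_, ?_⟩, hZt, hasDerivAt_revolve_angle _ _ θ, hNt, hasDerivAt_revolve_angle _ _ θ,
    hasDerivAt_const _ _, hasDerivAt_parallelTangent (hunit t) θ⟩
  · rw [revolve_dotProduct_revolve, ← hunit t]
    ring
  · rw [hZt.deriv, smul_revolve, revolve_dotProduct_revolve]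
    ring
  · rw [(hasDerivAt_revolve_angle _ _ θ).deriv, dotProduct_comm, dotProduct_smul,
      revolve_dotProduct_parallelTangent, smul_zero]
end

section
/- Let (γ,ν): I → ℝ² × S¹ be a Legendre curve with γ(t)=(x(t),z(t)), ν(t)=(a(t),b(t)) and curvature (ℓ,β). For the surfaces of revolution around the x-axis and around the z-axis, the curvatures of the associated framed surfaces are C^x_F(t,θ) = (−β(t)z(t), −b(t)ℓ(t), −(z(t)ℓ(t)+β(t)b(t))/2) and C^z_F(t,θ) = (−β(t)x(t), −a(t)ℓ(t), (x(t)ℓ(t)+β(t)a(t))/2). Then, for each t ∈ I, both C^x_F(t,θ) = 0 and C^z_F(t,θ) = 0 hold if and only if ℓ(t) = 0 and β(t) = 0. Consequently, the surface of revolution around the x-axis or around the z-axis is a front (its curvature of framed surface is nowhere zero) if and only if (γ,ν) is a Legendre immersion (i.e., (ℓ(t),β(t)) ≠ (0,0) for all t). -/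
/-- For a Legendre curve `(γ, ν)` with `γ = (x, z)`, `ν = (a, b)` and
curvature `(ℓ, β)`, the curvatures of the framed surfaces of revolution around the
x-axis and the z-axis are `C^x_F = (-βz, -bℓ, -(zℓ + βb)/2)` and
`C^z_F = (-βx, -aℓ, (xℓ + βa)/2)`.  For each `t`, both `C^x_F(t) = 0` and `C^z_F(t) = 0`
hold iff `ℓ t = 0 ∧ β t = 0`; consequently, the surface of revolution around the x-axis
or the z-axis is a front (at each point one of the curvatures is non-vanishing) iff
`(γ, ν)` is a Legendre immersion, i.e. `(ℓ t, β t) ≠ (0, 0)` for all `t`. -/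
theorem surface_of_revolution_front_iff_Legendre_immersion
    (x z a b ℓ β : ℝ → ℝ)
    (hx : ContDiff ℝ (⊤ : ℕ∞) x) (hz : ContDiff ℝ (⊤ : ℕ∞) z)
    (ha : ContDiff ℝ (⊤ : ℕ∞) a) (hb : ContDiff ℝ (⊤ : ℕ∞) b)
    (hunit : ∀ t, a t ^ 2 + b t ^ 2 = 1)
    (hdx : ∀ t, deriv x t = -(β t) * b t)
    (hdz : ∀ t, deriv z t = β t * a t)
    (hda : ∀ t, deriv a t = -(ℓ t) * b t)
    (hdb : ∀ t, deriv b t = ℓ t * a t)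
    (Cx Cz : ℝ → ℝ × ℝ × ℝ)
    (hCx : ∀ t, Cx t = (-(β t) * z t, -(b t) * ℓ t, -(z t * ℓ t + β t * b t) / 2))
    (hCz : ∀ t, Cz t = (-(β t) * x t, -(a t) * ℓ t, (x t * ℓ t + β t * a t) / 2)) :
    (∀ t : ℝ, (Cx t = (0, 0, 0) ∧ Cz t = (0, 0, 0)) ↔ (ℓ t = 0 ∧ β t = 0)) ∧
    ((∀ t : ℝ, Cx t ≠ (0, 0, 0) ∨ Cz t ≠ (0, 0, 0)) ↔
      (∀ t : ℝ, (ℓ t, β t) ≠ (0, 0))) := by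
  have key : ∀ t : ℝ, (Cx t = (0, 0, 0) ∧ Cz t = (0, 0, 0)) ↔ (ℓ t = 0 ∧ β t = 0) := by
    intro t
    rw [hCx, hCz, Prod.mk.injEq, Prod.mk.injEq, Prod.mk.injEq, Prod.mk.injEq]
    constructor
    · rintro ⟨⟨-, hbl, h3⟩, -, hal, h4⟩
      have hl : ℓ t = 0 := by
        have := hunit t
        have h1 : a t * ℓ t = 0 := by linarith [hal]
        have h2 : b t * ℓ t = 0 := by linarith [hbl]
        nlinarith [sq_nonneg (ℓ t)]
      refine ⟨hl, ?_⟩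
      have hb0 : β t * b t = 0 := by
        rw [hl] at h3; field_simp at h3; linarith
      have ha0 : β t * a t = 0 := by
        rw [hl] at h4; field_simp at h4; linarith
      nlinarith [hunit t, sq_nonneg (β t)]
    · rintro ⟨hl, hb0⟩
      simp [hl, hb0]
  refine ⟨key, ?_⟩
  constructor
  · intro h t
    intro hc
    rw [Prod.mk.injEq] at hc
    have hz := (key t).2 ⟨hc.1, hc.2⟩
    rcases h t with h' | h'
    · exact h' hz.1
    · exact h' hz.2
  · intro h t
    by_contra hc
    push_neg at hc
    have := (key t).1 ⟨hc.1, hc.2⟩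
    exact h t (by simp [this.1, this.2])
end

section
/- Let (γ,ν): I → ℝ² × S¹ be a Legendre curve with γ(t)=(x(t),z(t)), ν(t)=(a(t),b(t)) and curvature (ℓ,β), and let (𝐱,𝐧ˣ,𝐬ˣ) and (𝐳,𝐧ᶻ,𝐬ᶻ) be the associated framed surfaces of revolution around the x-axis and the z-axis. Then (𝐱,𝐧ˣ,𝐬ˣ) and (𝐳,𝐧ᶻ,𝐬ᶻ) are congruent as framed surfaces if and only if z(t) = x(t), ℓ(t) = 0 and a(t) = −b(t) for all t ∈ I; in that case ν is the constant (±1/√2, ∓1/√2) and γ(t) = (c₁ ± ∫ β(t)/√2 dt, c₂ ± ∫ β(t)/√2 dt) with c₁ = c₂. -/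
open Matrix Real

/-!
The half-turn `θ ↦ θ + π` negates the first coordinate of `𝐳` and `𝐧ᶻ`, but fixes the first
coordinate of `𝐱` and `𝐧ˣ` while negating the other two. Comparing the first coordinate of a
congruence at `θ = 0` and `θ = π`, and using that `𝐬` at `θ = π/2` forces `A e₂ = e₁`, gives
`z = x` and `a = -b`; conversely the cyclic permutation of coordinates carries one frame to the
other. Once `a = -b` we get `a² = 1/2`, so the continuous `a` is a constant `±1/√2`. Then
`a' = 0 = -ℓ b` forces `ℓ = 0`, and integrating `x' = -β b` gives `γ`.
-/

theorem eq_const_of_sq_eq_const {α : Type*} [TopologicalSpace α] [PreconnectedSpace α]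
    {f : α → ℝ} (hf : Continuous f) {c : ℝ} (hc : c ≠ 0) (hsq : ∀ t, f t ^ 2 = c)
    (s t : α) : f t = f s := by
  have hfs : f s ≠ 0 := fun h0 => hc (by rw [← hsq s, h0, zero_pow two_ne_zero])
  exact isPreconnected_univ.eq_of_sq_eq hf.continuousOn continuousOn_const
    (fun _ _ => by simp [hsq]) (fun _ => hfs) (Set.mem_univ s) rfl (Set.mem_univ t)

theorem exists_sign_div_sqrt_two_of_sq_eq_half {c : ℝ} (hc : c ^ 2 = 1 / 2) :
    ∃ ε : ℝ, (ε = 1 ∨ ε = -1) ∧ c = ε / √2 := by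
  have hsqrt : √2 * √2 = 2 := mul_self_sqrt zero_le_two
  refine ⟨√2 * c, ?_, by field_simp⟩
  rw [← mul_self_eq_one_iff]
  nlinarith

theorem ContDiff.eq_add_integral_deriv {f : ℝ → ℝ} (hf : ContDiff ℝ 1 f) (t₀ t : ℝ) :
    f t = f t₀ + ∫ s in t₀..t, deriv f s := by
  rw [intervalIntegral.integral_deriv_eq_sub
    (fun s _ => (hf.differentiable one_ne_zero).differentiableAt)
    ((hf.continuous_deriv le_rfl).intervalIntegrable _ _)]
  ring

def FramedCongruent (X N S X' N' S' : ℝ → ℝ → Fin 3 → ℝ) : Prop :=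
  ∃ (A : Matrix (Fin 3) (Fin 3) ℝ) (v : Fin 3 → ℝ), Aᵀ * A = 1 ∧ A.det = 1 ∧
    ∀ t θ, X' t θ = A *ᵥ X t θ + v ∧ N' t θ = A *ᵥ N t θ ∧ S' t θ = A *ᵥ S t θ

section Revolution

variable (x z a b : ℝ → ℝ)

noncomputable def surfRevX (t θ : ℝ) : Fin 3 → ℝ := ![x t, z t * cos θ, z t * sin θ]

noncomputable def normalRevX (t θ : ℝ) : Fin 3 → ℝ := ![-(a t), -(b t) * cos θ, -(b t) * sin θ]

noncomputable def tangentRevX (_ θ : ℝ) : Fin 3 → ℝ := ![0, sin θ, -cos θ]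

noncomputable def surfRevZ (t θ : ℝ) : Fin 3 → ℝ := ![x t * cos θ, x t * sin θ, z t]

noncomputable def normalRevZ (t θ : ℝ) : Fin 3 → ℝ := ![a t * cos θ, a t * sin θ, b t]

noncomputable def tangentRevZ (_ θ : ℝ) : Fin 3 → ℝ := ![sin θ, -cos θ, 0]

end Revolution

def cycleXYZ : Matrix (Fin 3) (Fin 3) ℝ := !![0, 1, 0; 0, 0, 1; 1, 0, 0]

theorem cycleXYZ_mulVec (p q r : ℝ) : cycleXYZ *ᵥ ![p, q, r] = ![q, r, p] := by
  ext i; fin_cases i <;> simp [cycleXYZ, mulVec, dotProduct, Fin.sum_univ_three]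

theorem cycleXYZ_transpose_mul_self : cycleXYZᵀ * cycleXYZ = 1 := by
  ext i j; fin_cases i <;> fin_cases j <;> simp [cycleXYZ, mul_apply, Fin.sum_univ_three]

theorem det_cycleXYZ : cycleXYZ.det = 1 := by
  simp [cycleXYZ, det_fin_three]

theorem mulVec_apply_zero_sub_mulVec_apply_zero (A : Matrix (Fin 3) (Fin 3) ℝ) (p q : ℝ) :
    (A *ᵥ ![p, q, 0]) 0 - (A *ᵥ ![p, -q, 0]) 0 = 2 * A 0 1 * q := by
  simp [mulVec, dotProduct, Fin.sum_univ_three]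
  ring

theorem framedCongruent_revolution_iff (x z a b : ℝ → ℝ) :
    FramedCongruent (surfRevX x z) (normalRevX a b) tangentRevX
        (surfRevZ x z) (normalRevZ a b) tangentRevZ ↔
      ∀ t, z t = x t ∧ a t = -(b t) := by
  constructor
  · rintro ⟨A, v, -, -, h⟩ t
    have hA : A 0 1 = 1 := by
      simpa [tangentRevX, tangentRevZ, mulVec, dotProduct, Fin.sum_univ_three]
        using (congrFun (h 0 (π / 2)).2.2 0).symm
    have hX₀ := congrFun (h t 0).1 0
    have hX₁ := congrFun (h t π).1 0
    have hN₀ := congrFun (h t 0).2.1 0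
    have hN₁ := congrFun (h t π).2.1 0
    simp only [surfRevX, surfRevZ, normalRevX, normalRevZ, cos_zero, sin_zero, cos_pi, sin_pi,
      mul_one, mul_zero, mul_neg, neg_neg, Pi.add_apply, cons_val_zero] at hX₀ hX₁ hN₀ hN₁
    have hX := mulVec_apply_zero_sub_mulVec_apply_zero A (x t) (z t)
    have hN := mulVec_apply_zero_sub_mulVec_apply_zero A (-(a t)) (-(b t))
    rw [neg_neg, hA] at hN
    rw [hA] at hX
    constructor <;> linarith
  · intro h
    refine ⟨cycleXYZ, 0, cycleXYZ_transpose_mul_self, det_cycleXYZ, fun t θ => ?_⟩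
    obtain ⟨hzx, hab⟩ := h t
    simp only [surfRevX, surfRevZ, normalRevX, normalRevZ, tangentRevX, tangentRevZ,
      cycleXYZ_mulVec, add_zero, hzx, hab, neg_neg, neg_mul, and_self]

section Legendre

variable {a b : ℝ → ℝ}

theorem normal_eq_sign_div_sqrt_two_of_eq_neg (ha : Continuous a)
    (hunit : ∀ t, a t ^ 2 + b t ^ 2 = 1) (hab : ∀ t, a t = -(b t)) :
    ∃ ε : ℝ, (ε = 1 ∨ ε = -1) ∧ ∀ t, a t = ε / √2 ∧ b t = -(ε / √2) := by
  have hsq : ∀ t, a t ^ 2 = 1 / 2 := fun t => by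
    linear_combination (hunit t + (a t - b t) * hab t) / 2
  obtain ⟨ε, hε, ha₀⟩ := exists_sign_div_sqrt_two_of_sq_eq_half (hsq 0)
  have hconst : ∀ t, a t = ε / √2 := fun t =>
    (eq_const_of_sq_eq_const ha (by norm_num) hsq 0 t).trans ha₀
  exact ⟨ε, hε, fun t => ⟨hconst t, by linarith [hconst t, hab t]⟩⟩

theorem curvature_eq_zero_of_normal_eq_neg {ℓ : ℝ → ℝ} (ha : Continuous a)
    (hunit : ∀ t, a t ^ 2 + b t ^ 2 = 1) (hda : ∀ t, deriv a t = -(ℓ t) * b t)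
    (hab : ∀ t, a t = -(b t)) (t : ℝ) : ℓ t = 0 := by
  obtain ⟨ε, hε, hν⟩ := normal_eq_sign_div_sqrt_two_of_eq_neg ha hunit hab
  have hda_t := hda t
  rw [show a = fun _ => ε / √2 from funext fun s => (hν s).1, deriv_const, (hν t).2] at hda_t
  have hε₀ : ε / √2 ≠ 0 := div_ne_zero (by rcases hε with rfl | rfl <;> norm_num) (by positivity)
  simpa [hε₀] using hda_t

end Legendre

theorem surfaces_of_revolution_congruent_iff_general
    (x z a b ℓ β : ℝ → ℝ)
    (hx : ContDiff ℝ (⊤ : ℕ∞) x)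
    (ha : ContDiff ℝ (⊤ : ℕ∞) a)
    (hunit : ∀ t, a t ^ 2 + b t ^ 2 = 1)
    (hdx : ∀ t, deriv x t = -(β t) * b t)
    (hda : ∀ t, deriv a t = -(ℓ t) * b t)
    (X Nx Sx Z Nz Sz : ℝ → ℝ → Fin 3 → ℝ)
    (hX : ∀ t θ, X t θ = ![x t, z t * cos θ, z t * sin θ])
    (hNx : ∀ t θ, Nx t θ = ![-(a t), -(b t) * cos θ, -(b t) * sin θ])
    (hSx : ∀ t θ, Sx t θ = ![0, sin θ, -cos θ])
    (hZ : ∀ t θ, Z t θ = ![x t * cos θ, x t * sin θ, z t])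
    (hNz : ∀ t θ, Nz t θ = ![a t * cos θ, a t * sin θ, b t])
    (hSz : ∀ t θ, Sz t θ = ![sin θ, -cos θ, 0]) :
    -- congruence as framed surfaces iff z = x, ℓ = 0, a = -b
    ((∃ (A : Matrix (Fin 3) (Fin 3) ℝ) (v : Fin 3 → ℝ),
        A.transpose * A = 1 ∧ A.det = 1 ∧
        ∀ t θ : ℝ, Z t θ = A.mulVec (X t θ) + v ∧
          Nz t θ = A.mulVec (Nx t θ) ∧ Sz t θ = A.mulVec (Sx t θ)) ↔
      (∀ t : ℝ, z t = x t ∧ ℓ t = 0 ∧ a t = -(b t))) ∧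
    -- in that case, ν = (±1/√2, ∓1/√2) is constant and
    -- γ(t) = (c ± ∫ β/√2, c ± ∫ β/√2)
    ((∀ t : ℝ, z t = x t ∧ ℓ t = 0 ∧ a t = -(b t)) →
      ∃ ε : ℝ, (ε = 1 ∨ ε = -1) ∧
        (∀ t : ℝ, a t = ε / Real.sqrt 2 ∧ b t = -(ε / Real.sqrt 2)) ∧
        ∀ t₀ t : ℝ, x t₀ = z t₀ ∧
          x t = x t₀ + ε * ∫ s in t₀..t, β s / Real.sqrt 2 ∧
          z t = z t₀ + ε * ∫ s in t₀..t, β s / Real.sqrt 2) := by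
  obtain rfl : X = surfRevX x z := funext₂ hX
  obtain rfl : Nx = normalRevX a b := funext₂ hNx
  obtain rfl : Sx = tangentRevX := funext₂ hSx
  obtain rfl : Z = surfRevZ x z := funext₂ hZ
  obtain rfl : Nz = normalRevZ a b := funext₂ hNz
  obtain rfl : Sz = tangentRevZ := funext₂ hSz
  refine ⟨(framedCongruent_revolution_iff x z a b).trans ⟨fun h t => ?_, fun h t => ?_⟩, fun hc => ?_⟩
  · exact ⟨(h t).1,
      curvature_eq_zero_of_normal_eq_neg ha.continuous hunit hda (fun s => (h s).2) t, (h t).2⟩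
  · exact ⟨(h t).1, (h t).2.2⟩
  obtain ⟨ε, hε, hν⟩ :=
    normal_eq_sign_div_sqrt_two_of_eq_neg ha.continuous hunit fun t => (hc t).2.2
  have hdx' : deriv x = fun s => ε * (β s / √2) :=
    funext fun s => by rw [hdx s, (hν s).2]; ring
  have hx_eq : ∀ t₀ t, x t = x t₀ + ε * ∫ s in t₀..t, β s / √2 := fun t₀ t => by
    rw [(hx.of_le (mod_cast le_top)).eq_add_integral_deriv t₀ t, hdx', intervalIntegral.integral_const_mul]
  refine ⟨ε, hε, hν, fun t₀ t => ⟨(hc t₀).1.symm, hx_eq t₀ t, ?_⟩⟩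
  rw [(hc t).1, (hc t₀).1]
  exact hx_eq t₀ t

/-- The framed surfaces of revolution `(𝐱, 𝐧ˣ, 𝐬ˣ)` (around the x-axis)
and `(𝐳, 𝐧ᶻ, 𝐬ᶻ)` (around the z-axis) of a Legendre curve `(γ, ν)` are congruent as
framed surfaces iff `z = x`, `ℓ = 0` and `a = -b` on `I`; in that case `ν` is the constant
`(±1/√2, ∓1/√2)` and `γ(t) = (c₁ ± ∫ β/√2, c₂ ± ∫ β/√2)` with `c₁ = c₂`. -/
theorem surfaces_of_revolution_congruent_iff
    (x z a b ℓ β : ℝ → ℝ)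
    (hx : ContDiff ℝ (⊤ : ℕ∞) x) (hz : ContDiff ℝ (⊤ : ℕ∞) z)
    (ha : ContDiff ℝ (⊤ : ℕ∞) a) (hb : ContDiff ℝ (⊤ : ℕ∞) b)
    (hβ : ContDiff ℝ (⊤ : ℕ∞) β)
    (hunit : ∀ t, a t ^ 2 + b t ^ 2 = 1)
    (hdx : ∀ t, deriv x t = -(β t) * b t)
    (hdz : ∀ t, deriv z t = β t * a t)
    (hda : ∀ t, deriv a t = -(ℓ t) * b t)
    (hdb : ∀ t, deriv b t = ℓ t * a t)
    (X Nx Sx Z Nz Sz : ℝ → ℝ → Fin 3 → ℝ)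
    (hX : ∀ t θ, X t θ = ![x t, z t * cos θ, z t * sin θ])
    (hNx : ∀ t θ, Nx t θ = ![-(a t), -(b t) * cos θ, -(b t) * sin θ])
    (hSx : ∀ t θ, Sx t θ = ![0, sin θ, -cos θ])
    (hZ : ∀ t θ, Z t θ = ![x t * cos θ, x t * sin θ, z t])
    (hNz : ∀ t θ, Nz t θ = ![a t * cos θ, a t * sin θ, b t])
    (hSz : ∀ t θ, Sz t θ = ![sin θ, -cos θ, 0]) :
    -- congruence as framed surfaces iff z = x, ℓ = 0, a = -b
    ((∃ (A : Matrix (Fin 3) (Fin 3) ℝ) (v : Fin 3 → ℝ),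
        A.transpose * A = 1 ∧ A.det = 1 ∧
        ∀ t θ : ℝ, Z t θ = A.mulVec (X t θ) + v ∧
          Nz t θ = A.mulVec (Nx t θ) ∧ Sz t θ = A.mulVec (Sx t θ)) ↔
      (∀ t : ℝ, z t = x t ∧ ℓ t = 0 ∧ a t = -(b t))) ∧
    -- in that case, ν = (±1/√2, ∓1/√2) is constant and
    -- γ(t) = (c ± ∫ β/√2, c ± ∫ β/√2)
    ((∀ t : ℝ, z t = x t ∧ ℓ t = 0 ∧ a t = -(b t)) →
      ∃ ε : ℝ, (ε = 1 ∨ ε = -1) ∧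
        (∀ t : ℝ, a t = ε / Real.sqrt 2 ∧ b t = -(ε / Real.sqrt 2)) ∧
        ∀ t₀ t : ℝ, x t₀ = z t₀ ∧
          x t = x t₀ + ε * ∫ s in t₀..t, β s / Real.sqrt 2 ∧
          z t = z t₀ + ε * ∫ s in t₀..t, β s / Real.sqrt 2) :=
  surfaces_of_revolution_congruent_iff_general x z a b ℓ β hx ha hunit hdx hda X Nx Sx Z Nz Sz hX
    hNx hSx hZ hNz hSz
end

section
/- Let (γ,ν): I → ℝ² × S¹ be a Legendre curve with γ(t)=(x(t),z(t)), ν(t)=(a(t),b(t)) and curvature (ℓ,β), and let 𝐳(t,θ)=(x(t)cosθ, x(t)sinθ, z(t)) be the surface of revolution around the z-axis. If x(t₀)=0, β(t₀)≠0, a(t₀)≠0 and b(t₀)≠0, then the map-germ 𝐳 at (t₀,θ₀) is 𝒜-equivalent to the cone: there exist diffeomorphism germs Φ of (ℝ²,(t₀,θ₀)) onto a neighbourhood of (0,θ₀) and Ψ of (ℝ³, 𝐳(t₀,θ₀)) onto a neighbourhood of the corresponding point such that Ψ ∘ 𝐳 = c ∘ Φ, where c(u,v) = (u cos v, u sin v,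 u). -/
open Real

/-- `f` is a germ of diffeomorphism at `p`, sending `p` to `q`: `f` is smooth near `p`
and has a smooth local inverse near `q`. -/
def DiffeoGermAt {E F : Type*} [NormedAddCommGroup E] [NormedSpace ℝ E]
    [NormedAddCommGroup F] [NormedSpace ℝ F] (f : E → F) (p : E) (q : F) : Prop :=
  f p = q ∧ ∃ (U : Set E) (V : Set F) (g : F → E),
    IsOpen U ∧ p ∈ U ∧ IsOpen V ∧ q ∈ V ∧
    ContDiffOn ℝ (⊤ : ℕ∞) f U ∧ ContDiffOn ℝ (⊤ : ℕ∞) g V ∧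
    Set.MapsTo f U V ∧ Set.MapsTo g V U ∧
    (∀ p' ∈ U, g (f p') = p') ∧ (∀ q' ∈ V, f (g q') = q')

open Set Filter Topology

/-!
Since `x' = -β b` and `z' = β a` do not vanish at `t₀`, both `x` and `z` are local
diffeomorphisms there, so near `t₀` the height determines the radius: `x = h ∘ z` with
`h = x ∘ z⁻¹` a diffeomorphism germ from `z t₀` to `x t₀ = 0`. The coordinate changes
`Φ (t, θ) = (x t, θ)` and `Ψ (X, Y, Z) = (X, Y, h Z)` then carry `𝐳` to the cone.
-/

section DiffeoGerm

variable {E F G E' F' : Type*} [NormedAddCommGroup E] [NormedSpace ℝ E]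
  [NormedAddCommGroup F] [NormedSpace ℝ F] [NormedAddCommGroup G] [NormedSpace ℝ G]
  [NormedAddCommGroup E'] [NormedSpace ℝ E'] [NormedAddCommGroup F'] [NormedSpace ℝ F']

theorem DiffeoGermAt.id (p : E) : DiffeoGermAt (id : E → E) p p :=
  ⟨rfl, univ, univ, _root_.id, isOpen_univ, trivial, isOpen_univ, trivial, contDiffOn_id,
    contDiffOn_id, mapsTo_univ _ _, mapsTo_univ _ _, fun _ _ => rfl, fun _ _ => rfl⟩

theorem DiffeoGermAt.exists_leftInverse {f : E → F} {p : E} {q : F} (hf : DiffeoGermAt f p q) :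
    ∃ g : F → E, DiffeoGermAt g q p ∧ ∀ᶠ y in 𝓝 p, g (f y) = y := by
  obtain ⟨rfl, U, V, g, hU, hpU, hV, hqV, hfU, hgV, hfUV, hgVU, hgf, hfg⟩ := hf
  exact ⟨g, ⟨hgf p hpU, V, U, f, hV, hqV, hU, hpU, hgV, hfU, hgVU, hfUV, hfg, hgf⟩,
    eventually_of_mem (hU.mem_nhds hpU) hgf⟩

theorem DiffeoGermAt.comp {g : F → G} {f : E → F} {p : E} {q : F} {r : G}
    (hg : DiffeoGermAt g q r) (hf : DiffeoGermAt f p q) : DiffeoGermAt (g ∘ f) p r := by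
  obtain ⟨rfl, U₁, V₁, f', hU₁, hpU₁, hV₁, hqV₁, hfU₁, hf'V₁, hfUV₁, hf'VU₁, hf'f, hff'⟩ := hf
  obtain ⟨rfl, U₂, V₂, g', hU₂, hqU₂, hV₂, hrV₂, hgU₂, hg'V₂, hgUV₂, hg'VU₂, hg'g, hgg'⟩ := hg
  refine ⟨rfl, U₁ ∩ f ⁻¹' U₂, V₂ ∩ g' ⁻¹' V₁, f' ∘ g',
    hfU₁.continuousOn.isOpen_inter_preimage hU₁ hU₂, ⟨hpU₁, hqU₂⟩,
    hg'V₂.continuousOn.isOpen_inter_preimage hV₂ hV₁, ⟨hgUV₂ hqU₂, by simp [hg'g _ hqU₂, hqV₁]⟩,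
    hgU₂.comp (hfU₁.mono inter_subset_left) fun y hy => hy.2,
    hf'V₁.comp (hg'V₂.mono inter_subset_left) fun w hw => hw.2, ?_, ?_, ?_, ?_⟩
  · rintro y ⟨hy₁, hy₂⟩
    exact ⟨hgUV₂ hy₂, by simp [hg'g _ hy₂, hfUV₁ hy₁]⟩
  · rintro w ⟨hw₂, hw₁⟩
    exact ⟨hf'VU₁ hw₁, by simp [hff' _ hw₁, hg'VU₂ hw₂]⟩
  · rintro y ⟨hy₁, hy₂⟩
    simp [hg'g _ hy₂, hf'f _ hy₁]
  · rintro w ⟨hw₂, hw₁⟩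
    simp [hff' _ hw₁, hgg' _ hw₂]

theorem DiffeoGermAt.prodMap {f : E → F} {f₂ : E' → F'} {p : E} {q : F} {p₂ : E'} {q₂ : F'}
    (hf : DiffeoGermAt f p q) (hf₂ : DiffeoGermAt f₂ p₂ q₂) :
    DiffeoGermAt (Prod.map f f₂) (p, p₂) (q, q₂) := by
  obtain ⟨rfl, U, V, g, hU, hpU, hV, hqV, hfU, hgV, hfUV, hgVU, hgf, hfg⟩ := hf
  obtain ⟨rfl, U₂, V₂, g₂, hU₂, hpU₂, hV₂, hqV₂, hfU₂, hgV₂, hfUV₂, hgVU₂, hgf₂, hfg₂⟩ := hf₂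
  exact ⟨rfl, U ×ˢ U₂, V ×ˢ V₂, Prod.map g g₂, hU.prod hU₂, ⟨hpU, hpU₂⟩, hV.prod hV₂,
    ⟨hqV, hqV₂⟩, hfU.prodMap hfU₂, hgV.prodMap hgV₂, hfUV.prodMap hfUV₂, hgVU.prodMap hgVU₂,
    fun y hy => Prod.ext (hgf _ hy.1) (hgf₂ _ hy.2),
    fun w hw => Prod.ext (hfg _ hw.1) (hfg₂ _ hw.2)⟩

theorem diffeoGermAt_of_hasFDerivAt_equiv [CompleteSpace E] {f : E → F} {f' : E ≃L[ℝ] F}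
    {W : Set E} {p : E} (hW : IsOpen W) (hpW : p ∈ W) (hf : ContDiffOn ℝ (⊤ : ℕ∞) f W)
    (hf' : HasFDerivAt f (f' : E →L[ℝ] F) p) : DiffeoGermAt f p (f p) := by
  have hn : ((⊤ : ℕ∞) : WithTop ℕ∞) ≠ 0 := by simp
  let P := (hf.contDiffAt (hW.mem_nhds hpW)).toOpenPartialHomeomorph f hf' hn
  have hPf : f = P := rfl
  have hpP : p ∈ P.source := ContDiffAt.mem_toOpenPartialHomeomorph_source _ hf' hn
  -- `P.symm` is smooth wherever the derivative of `f` is still invertible, an open condition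
  let U := P.source ∩ (W ∩ fderiv ℝ f ⁻¹' range ((↑) : (E ≃L[ℝ] F) → E →L[ℝ] F))
  have hU : IsOpen U := P.open_source.inter <|
    (hf.continuousOn_fderiv_of_isOpen hW (by simp)).isOpen_inter_preimage hW
      ContinuousLinearEquiv.isOpen
  refine ⟨rfl, U, P.target ∩ P.symm ⁻¹' U, P.symm, hU, ⟨hpP, hpW, f', hf'.fderiv.symm⟩,
    P.isOpen_inter_preimage_symm hU, ⟨P.map_source hpP, ?_⟩, hf.mono fun y hy => hy.2.1, ?_,
    fun y hy => ⟨P.map_source hy.1, by rw [mem_preimage, hPf, P.left_inv hy.1]; exact hy⟩,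
    fun w hw => hw.2,
    fun y hy => P.left_inv hy.1, fun w hw => P.right_inv hw.1⟩
  · rw [mem_preimage, hPf, P.left_inv hpP]
    exact ⟨hpP, hpW, f', hf'.fderiv.symm⟩
  · rintro w ⟨hw, -, hwW, g', hg'⟩
    have hfw := hf.contDiffAt (hW.mem_nhds hwW)
    exact (P.contDiffAt_symm hw (hg' ▸ (hfw.differentiableAt (by simp)).hasFDerivAt)
      hfw).contDiffWithinAt

end DiffeoGerm

theorem diffeoGermAt_of_deriv_ne_zero {f : ℝ → ℝ} {p : ℝ} (hf : ContDiff ℝ (⊤ : ℕ∞) f)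
    (hp : deriv f p ≠ 0) : DiffeoGermAt f p (f p) :=
  diffeoGermAt_of_hasFDerivAt_equiv isOpen_univ trivial hf.contDiffOn
    ((hf.differentiable (by simp) p).hasDerivAt.hasFDerivAt_equiv hp)

theorem surface_of_revolution_diffeomorphic_to_cone_general
    (x z a b β : ℝ → ℝ) (t₀ θ₀ : ℝ)
    (hx : ContDiff ℝ (⊤ : ℕ∞) x) (hz : ContDiff ℝ (⊤ : ℕ∞) z)
    (hdx : ∀ t, deriv x t = -(β t) * b t)
    (hdz : ∀ t, deriv z t = β t * a t)
    (hx0 : x t₀ = 0) (hβ0 : β t₀ ≠ 0) (ha0 : a t₀ ≠ 0) (hb0 : b t₀ ≠ 0) :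
    ∃ (Φ : ℝ × ℝ → ℝ × ℝ) (Ψ : ℝ × ℝ × ℝ → ℝ × ℝ × ℝ),
      DiffeoGermAt Φ (t₀, θ₀) (0, θ₀) ∧
      DiffeoGermAt Ψ (x t₀ * cos θ₀, x t₀ * sin θ₀, z t₀) (0, 0, 0) ∧
      ∀ᶠ p : ℝ × ℝ in nhds (t₀, θ₀),
        Ψ (x p.1 * cos p.2, x p.1 * sin p.2, z p.1) =
          ((Φ p).1 * cos (Φ p).2, (Φ p).1 * sin (Φ p).2, (Φ p).1) := by
  have hxg : DiffeoGermAt x t₀ (x t₀) :=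
    diffeoGermAt_of_deriv_ne_zero hx (by rw [hdx]; exact mul_ne_zero (neg_ne_zero.2 hβ0) hb0)
  have hzg : DiffeoGermAt z t₀ (z t₀) :=
    diffeoGermAt_of_deriv_ne_zero hz (by rw [hdz]; exact mul_ne_zero hβ0 ha0)
  obtain ⟨g, hg, hgz⟩ := hzg.exists_leftInverse
  refine ⟨Prod.map x id, Prod.map id (Prod.map id (x ∘ g)), ?_, ?_, ?_⟩
  · simpa [hx0] using hxg.prodMap (DiffeoGermAt.id θ₀)
  · simpa [hx0] using (DiffeoGermAt.id _).prodMap ((DiffeoGermAt.id _).prodMap (hxg.comp hg))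
  · filter_upwards [continuous_fst.continuousAt.eventually hgz] with p hp
    simp [hp]

/-- Let `(γ, ν)` be a Legendre curve with `γ = (x, z)`, `ν = (a, b)`,
curvature `(ℓ, β)`, and let `𝐳(t,θ) = (x t cos θ, x t sin θ, z t)` be the surface of
revolution around the z-axis.  If `x t₀ = 0`, `β t₀ ≠ 0`, `a t₀ ≠ 0` and `b t₀ ≠ 0`, then
the germ of `𝐳` at `(t₀, θ₀)` is 𝒜-equivalent to the cone `c(u,v) = (u cos v, u sin v, u)`
at `(0, θ₀)`. -/
theorem surface_of_revolution_diffeomorphic_to_cone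
    (x z a b ℓ β : ℝ → ℝ) (t₀ θ₀ : ℝ)
    (hx : ContDiff ℝ (⊤ : ℕ∞) x) (hz : ContDiff ℝ (⊤ : ℕ∞) z)
    (ha : ContDiff ℝ (⊤ : ℕ∞) a) (hb : ContDiff ℝ (⊤ : ℕ∞) b)
    (hunit : ∀ t, a t ^ 2 + b t ^ 2 = 1)
    (hdx : ∀ t, deriv x t = -(β t) * b t)
    (hdz : ∀ t, deriv z t = β t * a t)
    (hda : ∀ t, deriv a t = -(ℓ t) * b t)
    (hdb : ∀ t, deriv b t = ℓ t * a t)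
    (hx0 : x t₀ = 0) (hβ0 : β t₀ ≠ 0) (ha0 : a t₀ ≠ 0) (hb0 : b t₀ ≠ 0) :
    ∃ (Φ : ℝ × ℝ → ℝ × ℝ) (Ψ : ℝ × ℝ × ℝ → ℝ × ℝ × ℝ),
      DiffeoGermAt Φ (t₀, θ₀) (0, θ₀) ∧
      DiffeoGermAt Ψ (x t₀ * cos θ₀, x t₀ * sin θ₀, z t₀) (0, 0, 0) ∧
      ∀ᶠ p : ℝ × ℝ in nhds (t₀, θ₀),
        Ψ (x p.1 * cos p.2, x p.1 * sin p.2, z p.1) =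
          ((Φ p).1 * cos (Φ p).2, (Φ p).1 * sin (Φ p).2, (Φ p).1) :=
  surface_of_revolution_diffeomorphic_to_cone_general x z a b β t₀ θ₀ hx hz hdx hdz hx0 hβ0 ha0 hb0
end

section
/- Let (γ,ν): I → ℝ² × S¹ be a Legendre curve with ν(t)=(a(t),b(t)) and curvature (ℓ,β). If a(t)ℓ(t) = 0 for all t ∈ I (i.e., the curvature function K^z_F of the surface of revolution around the z-axis vanishes identically), then ℓ(t) = 0 for all t ∈ I, ν is constant, and γ is a part of a line: (γ(t) − γ(t₀))·ν(t₀) = 0 for all t, t₀ ∈ I. -/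
/-!
Since `a a' = -(a ℓ) b = 0`, the function `a²` is constant. If it is nonzero, then `a` never
vanishes and `a ℓ = 0` forces `ℓ = 0`; if it is zero, then `a ≡ 0`, so `0 = a' = -ℓ b` with
`b² = 1`, and again `ℓ = 0`. Then `ν' = 0`, so `ν` is constant, and `(γ - γ(t₀)) · ν(t₀)` has
derivative `β (μ · ν) = 0`.
-/

theorem sq_eq_sq_of_mul_deriv_eq_zero {f : ℝ → ℝ} (hf : Differentiable ℝ f)
    (hff' : ∀ t, f t * deriv f t = 0) (t s : ℝ) : f t ^ 2 = f s ^ 2 := by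
  refine is_const_of_deriv_eq_zero (hf.pow 2) (fun u => ?_) t s
  rw [deriv_pow (hf u)]
  linear_combination (2 : ℝ) * hff' u

theorem legendre_curvature_eq_zero_of_mul_eq_zero {a b ℓ : ℝ → ℝ} (ha : Differentiable ℝ a)
    (hunit : ∀ t, a t ^ 2 + b t ^ 2 = 1) (hda : ∀ t, deriv a t = -(ℓ t) * b t)
    (hK : ∀ t, a t * ℓ t = 0) (t : ℝ) : ℓ t = 0 := by
  have ha_sq : ∀ s, a s ^ 2 = a t ^ 2 := fun s =>
    sq_eq_sq_of_mul_deriv_eq_zero ha (fun u => by linear_combination -b u * hK u + a u * hda u) s t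
  by_cases hat : a t = 0
  · have ha_zero : a = fun _ => 0 := funext fun s => by
      simpa [hat] using ha_sq s
    have hℓb : ℓ t * b t = 0 := by
      simpa [ha_zero] using (hda t).symm
    have hbt : b t ^ 2 = 1 := by simpa [hat] using hunit t
    rcases mul_eq_zero.mp hℓb with h | h
    · exact h
    · simp [h] at hbt
  · exact (mul_eq_zero.mp (hK t)).resolve_left hat

theorem sub_mul_add_sub_mul_eq_zero_of_deriv_eq {x z β : ℝ → ℝ} {a₀ b₀ : ℝ}
    (hx : Differentiable ℝ x) (hz : Differentiable ℝ z)
    (hdx : ∀ t, deriv x t = -(β t) * b₀) (hdz : ∀ t, deriv z t = β t * a₀) (t t₀ : ℝ) :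
    (x t - x t₀) * a₀ + (z t - z t₀) * b₀ = 0 := by
  have hconst : x t * a₀ + z t * b₀ = x t₀ * a₀ + z t₀ * b₀ := by
    refine is_const_of_deriv_eq_zero ((hx.mul_const a₀).add (hz.mul_const b₀)) (fun s => ?_) t t₀
    rw [deriv_add ((hx s).mul_const a₀) ((hz s).mul_const b₀), deriv_mul_const (hx s),
      deriv_mul_const (hz s), hdx, hdz]
    ring
  linear_combination hconst

/-- Let `(γ, ν)` be a Legendre curve with `γ = (x, z)`, `ν = (a, b)` and
curvature `(ℓ, β)`.  If `a(t) ℓ(t) = 0` for all `t` (i.e. the curvature `K^z_F = -aℓ` of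
the surface of revolution around the z-axis vanishes identically), then `ℓ ≡ 0`, `ν` is
constant, and `γ` is a part of a line: `(γ(t) - γ(t₀)) · ν(t₀) = 0` for all `t, t₀`. -/
theorem zero_Gauss_curvature_surface_of_revolution
    (x z a b ℓ β : ℝ → ℝ)
    (hx : ContDiff ℝ (⊤ : ℕ∞) x) (hz : ContDiff ℝ (⊤ : ℕ∞) z)
    (ha : ContDiff ℝ (⊤ : ℕ∞) a) (hb : ContDiff ℝ (⊤ : ℕ∞) b)
    (hunit : ∀ t, a t ^ 2 + b t ^ 2 = 1)
    (hdx : ∀ t, deriv x t = -(β t) * b t)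
    (hdz : ∀ t, deriv z t = β t * a t)
    (hda : ∀ t, deriv a t = -(ℓ t) * b t)
    (hdb : ∀ t, deriv b t = ℓ t * a t)
    (hK : ∀ t, a t * ℓ t = 0) :
    (∀ t : ℝ, ℓ t = 0) ∧
    (∀ t t₀ : ℝ, a t = a t₀ ∧ b t = b t₀) ∧
    (∀ t t₀ : ℝ, (x t - x t₀) * a t₀ + (z t - z t₀) * b t₀ = 0) := by
  have hℓ := legendre_curvature_eq_zero_of_mul_eq_zero (ha.differentiable (by simp)) hunit hda hK
  have hν : ∀ t t₀, a t = a t₀ ∧ b t = b t₀ := fun t t₀ =>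
    ⟨is_const_of_deriv_eq_zero (ha.differentiable (by simp)) (by simp [hda, hℓ]) t t₀,
      is_const_of_deriv_eq_zero (hb.differentiable (by simp)) (by simp [hdb, hℓ]) t t₀⟩
  refine ⟨hℓ, hν, fun t t₀ => ?_⟩
  exact sub_mul_add_sub_mul_eq_zero_of_deriv_eq (hx.differentiable (by simp))
    (hz.differentiable (by simp)) (fun s => by rw [hdx, (hν s t₀).2])
    (fun s => by rw [hdz, (hν s t₀).1]) t t₀
end

section
/- Let (γ,ν): I → ℝ² × S¹ be a Legendre curve with γ(t)=(x(t),z(t)), ν(t)=(cos φ(t), sin φ(t)) and curvature (φ̇,β), and let J(t) = −β(t)x(t), K(t) = −φ̇(t)cos φ(t). Suppose α: I → ℝ is a function with K(t) = α(t)J(t) for all t. Then x satisfies the second order linear ODE β(t)ẍ(t) − β̇(t)ẋ(t) + α(t)β(t)³x(t) = 0 on I; moreover (d/dt)(sin φ(t)) = α(t)β(t)x(t), so sin φ(t) = sin φ(t₀) + ∫_{t₀}^{t} α(s)β(s)x(s) ds, cos φ(t)² = 1 − (sin φ(t))², and z(t) = z(t₀) + ∫_{t₀}^{t} β(s)cos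 φ(s) ds. -/
/-!
Differentiating `sin φ` gives `φ̇ cos φ`, which the relation `K = αJ` identifies with `αβx`.
Differentiating `ẋ = -β sin φ` once more and substituting this yields the second order equation
for `x`; the two integral formulas are the fundamental theorem of calculus applied to `sin ∘ φ`
and to `z`.
-/

open Real

theorem eq_add_integral_of_deriv_eq {f g : ℝ → ℝ} (hf : Differentiable ℝ f) (hg : Continuous g)
    (hfg : deriv f = g) (a b : ℝ) : f b = f a + ∫ s in a..b, g s := by
  rw [intervalIntegral.integral_deriv_eq_sub' f hfg (fun s _ => hf s) hg.continuousOn]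
  ring

section CurvatureRatio

variable {x φ β α : ℝ → ℝ}

theorem deriv_mul_cos_eq_of_curvature_ratio
    (hKJ : ∀ t, -(deriv φ t) * cos (φ t) = α t * (-(β t) * x t)) (t : ℝ) :
    deriv φ t * cos (φ t) = α t * β t * x t := by
  linear_combination -hKJ t

theorem hasDerivAt_sin_comp_of_curvature_ratio (hφ : Differentiable ℝ φ)
    (hratio : ∀ t, deriv φ t * cos (φ t) = α t * β t * x t) (t : ℝ) :
    HasDerivAt (fun s => sin (φ s)) (α t * β t * x t) t := by
  simpa only [mul_comm (cos (φ t)), hratio t] using (hφ t).hasDerivAt.sin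

theorem profile_ode_of_curvature_ratio (hφ : Differentiable ℝ φ) (hβ : Differentiable ℝ β)
    (hdx : ∀ t, deriv x t = -(β t) * sin (φ t))
    (hratio : ∀ t, deriv φ t * cos (φ t) = α t * β t * x t) (t : ℝ) :
    β t * deriv (deriv x) t - deriv β t * deriv x t + α t * β t ^ 3 * x t = 0 := by
  have hddx : HasDerivAt (deriv x)
      (-(deriv β t) * sin (φ t) + -(β t) * (α t * β t * x t)) t := by
    rw [funext hdx]
    exact (hβ t).hasDerivAt.neg.mul (hasDerivAt_sin_comp_of_curvature_ratio hφ hratio t)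
  rw [hddx.deriv, hdx t]
  ring

end CurvatureRatio

theorem profile_curve_from_Gauss_curvature_ratio_general
    (x z φ β α : ℝ → ℝ)
    (hz : ContDiff ℝ (⊤ : ℕ∞) z)
    (hφ : ContDiff ℝ (⊤ : ℕ∞) φ) (hβ : ContDiff ℝ (⊤ : ℕ∞) β)
    (hdx : ∀ t, deriv x t = -(β t) * sin (φ t))
    (hdz : ∀ t, deriv z t = β t * cos (φ t))
    -- K = α J,  where K = -φ̇ cos φ and J = -βx
    (hKJ : ∀ t, -(deriv φ t) * cos (φ t) = α t * (-(β t) * x t)) :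
    (∀ t : ℝ,
      β t * deriv (deriv x) t - deriv β t * deriv x t + α t * β t ^ 3 * x t = 0) ∧
    (∀ t : ℝ, deriv (fun s => sin (φ s)) t = α t * β t * x t) ∧
    (∀ t₀ t : ℝ, sin (φ t) = sin (φ t₀) + ∫ s in t₀..t, α s * β s * x s) ∧
    (∀ t : ℝ, cos (φ t) ^ 2 = 1 - sin (φ t) ^ 2) ∧
    (∀ t₀ t : ℝ, z t = z t₀ + ∫ s in t₀..t, β s * cos (φ s)) := by
  have hφd : Differentiable ℝ φ := hφ.differentiable (by simp)
  have hratio := deriv_mul_cos_eq_of_curvature_ratio hKJ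
  have hsin := hasDerivAt_sin_comp_of_curvature_ratio hφd hratio
  have hcos_cont : Continuous fun s => cos (φ s) := continuous_cos.comp hφ.continuous
  have hαβx_cont : Continuous fun s => α s * β s * x s := by
    simp only [← hratio]
    exact (hφ.continuous_deriv (by simp)).mul hcos_cont
  refine ⟨profile_ode_of_curvature_ratio hφd (hβ.differentiable (by simp)) hdx hratio,
    fun t => (hsin t).deriv, ?_, fun t => cos_sq' (φ t), ?_⟩
  · exact eq_add_integral_of_deriv_eq (fun t => (hsin t).differentiableAt) hαβx_cont
      (funext fun t => (hsin t).deriv)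
  · exact eq_add_integral_of_deriv_eq (hz.differentiable (by simp)) (hβ.continuous.mul hcos_cont)
      (funext hdz)

/-- Let `(γ, ν)` be a Legendre curve with `γ = (x, z)`,
`ν = (cos φ, sin φ)` and curvature `(φ̇, β)` (so `ẋ = -β sin φ`, `ż = β cos φ`), and let
`J = -βx`, `K = -φ̇ cos φ`.  If `α : I → ℝ` satisfies `K = αJ`, then `x` solves
`βẍ - β̇ẋ + αβ³x = 0`; moreover `(sin φ)' = αβx`, so
`sin φ(t) = sin φ(t₀) + ∫_{t₀}^{t} αβx`, `cos²φ = 1 - sin²φ`, and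
`z(t) = z(t₀) + ∫_{t₀}^{t} β cos φ`. -/
theorem profile_curve_from_Gauss_curvature_ratio
    (x z φ β α : ℝ → ℝ)
    (hx : ContDiff ℝ (⊤ : ℕ∞) x) (hz : ContDiff ℝ (⊤ : ℕ∞) z)
    (hφ : ContDiff ℝ (⊤ : ℕ∞) φ) (hβ : ContDiff ℝ (⊤ : ℕ∞) β)
    (hdx : ∀ t, deriv x t = -(β t) * sin (φ t))
    (hdz : ∀ t, deriv z t = β t * cos (φ t))
    -- K = α J,  where K = -φ̇ cos φ and J = -βx
    (hKJ : ∀ t, -(deriv φ t) * cos (φ t) = α t * (-(β t) * x t)) :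
    (∀ t : ℝ,
      β t * deriv (deriv x) t - deriv β t * deriv x t + α t * β t ^ 3 * x t = 0) ∧
    (∀ t : ℝ, deriv (fun s => sin (φ s)) t = α t * β t * x t) ∧
    (∀ t₀ t : ℝ, sin (φ t) = sin (φ t₀) + ∫ s in t₀..t, α s * β s * x s) ∧
    (∀ t : ℝ, cos (φ t) ^ 2 = 1 - sin (φ t) ^ 2) ∧
    (∀ t₀ t : ℝ, z t = z t₀ + ∫ s in t₀..t, β s * cos (φ s)) :=
  profile_curve_from_Gauss_curvature_ratio_general x z φ β α hz hφ hβ hdx hdz hKJ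
end

section
/- Let (γ,ν): (I,t₀) → ℝ² × S¹ be a Legendre curve with γ(t)=(x(t),z(t)), ν(t)=(cos φ(t), sin φ(t)) and curvature (φ̇,β), and suppose x(t₀) > 0. Let J(t) = −β(t)x(t) and K(t) = −φ̇(t)cos φ(t). Then sin φ(t) = sin φ(t₀) − ∫_{t₀}^{t} K(s) ds, (d/dt)(x(t)²) = 2J(t)sin φ(t), so x(t) = (x(t₀)² + 2∫_{t₀}^{t} J(s)sin φ(s) ds)^{1/2} near t₀, and z(t) = z(t₀) − ∫_{t₀}^{t} (J(s)/x(s))cos φ(s) ds, with cos φ(t)² = 1 − (sin φ(t))². -/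
open Real Filter Topology Set intervalIntegral

/- Every formula is the fundamental theorem of calculus applied to a `C¹` function whose derivative
is the integrand: `sin ∘ φ` has derivative `-K`, `x²` has derivative `2 J sin φ`, and, where `x ≠ 0`,
`z` has derivative `β cos φ = -(J / x) cos φ`. Taking the positive square root of `x²` and dividing
by `x` both need `x > 0`, which holds on a neighbourhood of `t₀`. -/

theorem integral_deriv_eq_sub_of_contDiff {f : ℝ → ℝ} (hf : ContDiff ℝ 1 f) (a b : ℝ) :
    ∫ s in a..b, deriv f s = f b - f a :=
  integral_deriv_eq_sub (fun s _ => hf.differentiable one_ne_zero s)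
    ((hf.continuous_deriv le_rfl).intervalIntegrable a b)

theorem eventually_forall_mem_uIcc {p : ℝ → Prop} {a : ℝ} (h : ∀ᶠ s in 𝓝 a, p s) :
    ∀ᶠ t in 𝓝 a, ∀ s ∈ uIcc a t, p s := by
  obtain ⟨l, u, ha, hsub⟩ := mem_nhds_iff_exists_Ioo_subset.mp h
  filter_upwards [Ioo_mem_nhds ha.1 ha.2] with t ht s hs
  exact hsub (ordConnected_Ioo.uIcc_subset ha ht hs)

theorem profile_curve_from_given_J_and_K_general
    (x z φ β J K : ℝ → ℝ) (t₀ : ℝ)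
    (hx : ContDiff ℝ (⊤ : ℕ∞) x) (hz : ContDiff ℝ (⊤ : ℕ∞) z)
    (hφ : ContDiff ℝ (⊤ : ℕ∞) φ)
    (hdx : ∀ t, deriv x t = -(β t) * sin (φ t))
    (hdz : ∀ t, deriv z t = β t * cos (φ t))
    (hJ : ∀ t, J t = -(β t) * x t)
    (hK : ∀ t, K t = -(deriv φ t) * cos (φ t))
    (hx0 : x t₀ > 0) :
    (∀ t : ℝ, sin (φ t) = sin (φ t₀) - ∫ s in t₀..t, K s) ∧
    (∀ t : ℝ, deriv (fun s => x s ^ 2) t = 2 * J t * sin (φ t)) ∧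
    (∀ᶠ t in nhds t₀,
      x t = Real.sqrt (x t₀ ^ 2 + 2 * ∫ s in t₀..t, J s * sin (φ s))) ∧
    (∀ᶠ t in nhds t₀,
      z t = z t₀ - ∫ s in t₀..t, (J s / x s) * cos (φ s)) ∧
    (∀ t : ℝ, cos (φ t) ^ 2 = 1 - sin (φ t) ^ 2) := by
  have hx1 : ContDiff ℝ 1 x := hx.of_le (by exact_mod_cast le_top)
  have hz1 : ContDiff ℝ 1 z := hz.of_le (by exact_mod_cast le_top)
  have hφ1 : ContDiff ℝ 1 φ := hφ.of_le (by exact_mod_cast le_top)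
  have hdx2 : ∀ t, deriv (fun s => x s ^ 2) t = 2 * J t * sin (φ t) := fun t => by
    rw [deriv_fun_pow (hx1.differentiable one_ne_zero t), hdx, hJ]
    ring
  have hx2 : ∀ t, x t ^ 2 = x t₀ ^ 2 + 2 * ∫ s in t₀..t, J s * sin (φ s) := fun t => by
    have hftc := integral_deriv_eq_sub_of_contDiff (hx1.pow 2) t₀ t
    simp only [hdx2, mul_assoc, integral_const_mul] at hftc
    linarith
  have hpos : ∀ᶠ t in 𝓝 t₀, 0 < x t :=
    continuousAt_const.eventually_lt hx.continuous.continuousAt hx0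
  refine ⟨fun t => ?_, hdx2, ?_, ?_, fun t => cos_sq' _⟩
  · have hK_eq_neg_deriv : K = fun s => -deriv (fun u => sin (φ u)) s := funext fun s => by
      rw [hK, deriv_sin (hφ1.differentiable one_ne_zero s)]
      ring
    rw [hK_eq_neg_deriv, integral_neg, integral_deriv_eq_sub_of_contDiff hφ1.sin]
    ring
  · filter_upwards [hpos] with t ht
    rw [← hx2, sqrt_sq ht.le]
  · filter_upwards [eventually_forall_mem_uIcc hpos] with t ht
    have hintegrand : ∀ s ∈ uIcc t₀ t, J s / x s * cos (φ s) = -deriv z s := fun s hs => by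
      rw [hJ, hdz]
      field_simp [(ht s hs).ne']
    rw [integral_congr hintegrand, integral_neg, integral_deriv_eq_sub_of_contDiff hz1]
    ring

/-- Let `(γ, ν)` be a Legendre curve with `γ = (x, z)`,
`ν = (cos φ, sin φ)`, curvature `(φ̇, β)`, and `x t₀ > 0`.  With `J = -βx` and
`K = -φ̇ cos φ`, one has `sin φ(t) = sin φ(t₀) - ∫_{t₀}^t K`, `(x²)' = 2J sin φ`, hence
`x(t) = √(x(t₀)² + 2∫_{t₀}^t J sin φ)` near `t₀`, and
`z(t) = z(t₀) - ∫_{t₀}^t (J/x) cos φ` near `t₀`, with `cos²φ = 1 - sin²φ`. -/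
theorem profile_curve_from_given_J_and_K
    (x z φ β J K : ℝ → ℝ) (t₀ : ℝ)
    (hx : ContDiff ℝ (⊤ : ℕ∞) x) (hz : ContDiff ℝ (⊤ : ℕ∞) z)
    (hφ : ContDiff ℝ (⊤ : ℕ∞) φ) (hβ : ContDiff ℝ (⊤ : ℕ∞) β)
    (hdx : ∀ t, deriv x t = -(β t) * sin (φ t))
    (hdz : ∀ t, deriv z t = β t * cos (φ t))
    (hJ : ∀ t, J t = -(β t) * x t)
    (hK : ∀ t, K t = -(deriv φ t) * cos (φ t))
    (hx0 : x t₀ > 0) :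
    (∀ t : ℝ, sin (φ t) = sin (φ t₀) - ∫ s in t₀..t, K s) ∧
    (∀ t : ℝ, deriv (fun s => x s ^ 2) t = 2 * J t * sin (φ t)) ∧
    (∀ᶠ t in nhds t₀,
      x t = Real.sqrt (x t₀ ^ 2 + 2 * ∫ s in t₀..t, J s * sin (φ s))) ∧
    (∀ᶠ t in nhds t₀,
      z t = z t₀ - ∫ s in t₀..t, (J s / x s) * cos (φ s)) ∧
    (∀ t : ℝ, cos (φ t) ^ 2 = 1 - sin (φ t) ^ 2) :=
  profile_curve_from_given_J_and_K_general x z φ β J K t₀ hx hz hφ hdx hdz hJ hK hx0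
end

section
/- Let (γ,ν): (I,t₀) → ℝ² × S¹ be a Legendre curve with γ(t)=(x(t),z(t)), ν(t)=(cos φ(t), sin φ(t)) and curvature (φ̇,β), and suppose x(t₀) > 0. Let J(t) = −β(t)x(t), H(t) = (x(t)φ̇(t) + β(t)cos φ(t))/2, and suppose α: I → ℝ is a smooth function with H(t) = α(t)J(t) for all t. Then the complex-valued function X(t) = x(t)sin φ(t) + i x(t)cos φ(t) satisfies the first order linear ODE Ẋ(t) − 2iα(t)β(t)X(t) = −β(t). Consequently, if η, F, G: I → ℝ satisfy η̇ = 2αβ, Ḟ = −β cos η, Ġ = −β sin η and X(t₀) = (F(t₀) − iG(t₀))(cos η(t₀) + i sin η(t₀)), then X(t) = (F(t) − iG(t))(cos η(t) + i sin η(t)) for all t; in particular x(t)cos φ(t) = F(t)sin η(t) − G(t)cos η(t), x(t)sin φ(t) = F(t)cos η(t) + G(t)sin η(t), and x(t)² = F(t)² + G(t)². -/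
/-!
Writing `X = x sin φ + i x cos φ = i x e^{-iφ}`, the Legendre condition `ẋ = -β sin φ` and the
relation `x φ̇ = -2αβx - β cos φ` (which is `H = αJ`) give `Ẋ = 2iαβ X - β`. The function
`Y = (F - iG) e^{iη}` satisfies the same linear equation, since `Ḟ - iĠ = -β e^{-iη}` and
`η̇ = 2αβ`. Multiplying `X - Y` by the integrating factor `e^{-iη}` gives a function with zero
derivative that vanishes at `t₀`; hence `X = Y`. Real and imaginary parts give the formulas for
`x cos φ` and `x sin φ`, and `x² = |X|² = |Y|² = F² + G²`.
-/

open Real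

section

open Complex

theorem eq_zero_of_hasDerivAt_eq_mul_self {D a c : ℝ → ℂ} (hc : ∀ t, HasDerivAt c (a t) t)
    (hD : ∀ t, HasDerivAt D (a t * D t) t) {t₀ : ℝ} (h₀ : D t₀ = 0) (t : ℝ) : D t = 0 := by
  have hconst : ∀ s, HasDerivAt (fun s => D s * exp (-c s)) 0 s := fun s =>
    ((hD s).mul (hc s).neg.cexp).congr_deriv (by simp only [Pi.neg_apply]; ring)
  have h := is_const_of_deriv_eq_zero (fun s => (hconst s).differentiableAt)
    (fun s => (hconst s).deriv) t t₀
  simpa [h₀, Complex.exp_ne_zero] using h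

theorem eq_of_hasDerivAt_eq_mul_sub {X Y a b c : ℝ → ℂ} (hc : ∀ t, HasDerivAt c (a t) t)
    (hX : ∀ t, HasDerivAt X (a t * X t - b t) t) (hY : ∀ t, HasDerivAt Y (a t * Y t - b t) t)
    {t₀ : ℝ} (h₀ : X t₀ = Y t₀) : X = Y := by
  funext t
  refine sub_eq_zero.mp (eq_zero_of_hasDerivAt_eq_mul_self (D := X - Y) hc (fun s => ?_)
    (sub_eq_zero.mpr h₀) t)
  exact ((hX s).sub (hY s)).congr_deriv (by simp only [Pi.sub_apply]; ring)

theorem ofReal_cos_add_I_mul_ofReal_sin (θ : ℝ) :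
    ((Real.cos θ : ℝ) : ℂ) + I * ((Real.sin θ : ℝ) : ℂ) = exp (θ * I) := by
  rw [exp_mul_I, ofReal_cos, ofReal_sin]
  ring

theorem ofReal_mul_sin_add_I_mul_ofReal_mul_cos (r θ : ℝ) :
    ((r * Real.sin θ : ℝ) : ℂ) + I * ((r * Real.cos θ : ℝ) : ℂ) = I * r * exp (-(θ * I)) := by
  rw [← neg_mul, ← ofReal_neg, ← ofReal_cos_add_I_mul_ofReal_sin, Real.cos_neg, Real.sin_neg]
  simp only [ofReal_mul, ofReal_neg]
  linear_combination ((r : ℂ) * Real.sin θ) * I_sq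

theorem hasDerivAt_profile_of_H_eq_mul_J {x φ β α : ℝ → ℝ} {φ' t : ℝ}
    (hx : HasDerivAt x (-(β t) * Real.sin (φ t)) t) (hφ : HasDerivAt φ φ' t)
    (hHJ : (x t * φ' + β t * Real.cos (φ t)) / 2 = α t * (-(β t) * x t)) :
    HasDerivAt (fun t => I * x t * exp (-(φ t * I)))
      (2 * I * α t * β t * (I * x t * exp (-(φ t * I))) - β t) t := by
  have hphase : (((Real.cos (φ t) : ℝ) : ℂ) + I * ((Real.sin (φ t) : ℝ) : ℂ)) *
      exp (-(φ t * I)) = 1 := by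
    rw [ofReal_cos_add_I_mul_ofReal_sin, ← Complex.exp_add, add_neg_cancel, Complex.exp_zero]
  have hHJℂ : ((x t : ℂ) * φ' + β t * (Real.cos (φ t) : ℝ)) / 2 = α t * (-(β t) * x t) := by
    exact_mod_cast hHJ
  refine ((hx.ofReal_comp.const_mul I).mul (hφ.ofReal_comp.mul_const I).neg.cexp).congr_deriv ?_
  simp only [ofReal_mul, ofReal_neg]
  linear_combination (-((x t : ℂ) * φ' + 2 * α t * β t * x t) * exp (-(φ t * I))) * I_sq +
    2 * exp (-(φ t * I)) * hHJℂ - (β t : ℂ) * hphase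

theorem hasDerivAt_sub_I_mul_mul_exp_mul_I {F G η β : ℝ → ℝ} {η' t : ℝ}
    (hF : HasDerivAt F (-(β t) * Real.cos (η t)) t)
    (hG : HasDerivAt G (-(β t) * Real.sin (η t)) t) (hη : HasDerivAt η η' t) :
    HasDerivAt (fun t => ((F t : ℂ) - I * G t) * exp (η t * I))
      (I * η' * (((F t : ℂ) - I * G t) * exp (η t * I)) - β t) t := by
  have hpyth : ((Real.sin (η t) : ℝ) : ℂ) ^ 2 + ((Real.cos (η t) : ℝ) : ℂ) ^ 2 = 1 := by
    exact_mod_cast Real.sin_sq_add_cos_sq (η t)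
  refine ((hF.ofReal_comp.sub (hG.ofReal_comp.const_mul I)).mul
    (hη.ofReal_comp.mul_const I).cexp).congr_deriv ?_
  rw [← ofReal_cos_add_I_mul_ofReal_sin]
  simp only [Pi.sub_apply, ofReal_mul, ofReal_neg]
  linear_combination (β t : ℂ) * ((Real.sin (η t) : ℝ) : ℂ) ^ 2 * I_sq - (β t : ℂ) * hpyth

theorem mul_cos_eq_and_mul_sin_eq_of_eq {r θ F G η : ℝ}
    (h : ((r * Real.sin θ : ℝ) : ℂ) + I * ((r * Real.cos θ : ℝ) : ℂ) =
      ((F : ℂ) - I * G) * (((Real.cos η : ℝ) : ℂ) + I * ((Real.sin η : ℝ) : ℂ))) :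
    r * Real.cos θ = F * Real.sin η - G * Real.cos η ∧
      r * Real.sin θ = F * Real.cos η + G * Real.sin η := by
  have hre := congrArg re h
  have him := congrArg im h
  simp only [add_re, add_im, sub_re, sub_im, mul_re, mul_im, I_re, I_im, ofReal_re, ofReal_im] at hre him
  constructor <;> linarith

end

theorem sq_eq_sq_add_sq_of_mul_cos_of_mul_sin {r θ F G η : ℝ}
    (hcos : r * cos θ = F * sin η - G * cos η) (hsin : r * sin θ = F * cos η + G * sin η) :
    r ^ 2 = F ^ 2 + G ^ 2 :=
  calc r ^ 2 = (r * sin θ) ^ 2 + (r * cos θ) ^ 2 := by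
        linear_combination r ^ 2 * (sin_sq_add_cos_sq θ).symm
    _ = (F * cos η + G * sin η) ^ 2 + (F * sin η - G * cos η) ^ 2 := by rw [hsin, hcos]
    _ = F ^ 2 + G ^ 2 := by linear_combination (F ^ 2 + G ^ 2) * sin_sq_add_cos_sq η

theorem profile_curve_from_mean_curvature_ratio_general
    (x φ β α : ℝ → ℝ) (t₀ : ℝ)
    (hx : ContDiff ℝ (⊤ : ℕ∞) x)
    (hφ : ContDiff ℝ (⊤ : ℕ∞) φ)
    (hdx : ∀ t, deriv x t = -(β t) * sin (φ t))
    -- H = α J, where H = (xφ̇ + β cos φ)/2 and J = -βx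
    (hHJ : ∀ t, (x t * deriv φ t + β t * cos (φ t)) / 2 = α t * (-(β t) * x t))
    (X : ℝ → ℂ)
    (hX : ∀ t, X t = ((x t * sin (φ t) : ℝ) : ℂ) +
      Complex.I * ((x t * cos (φ t) : ℝ) : ℂ)) :
    (∀ t : ℝ, deriv X t - 2 * Complex.I * (α t : ℂ) * (β t : ℂ) * X t = -(β t : ℂ)) ∧
    (∀ η F G : ℝ → ℝ,
      ContDiff ℝ (⊤ : ℕ∞) η → ContDiff ℝ (⊤ : ℕ∞) F → ContDiff ℝ (⊤ : ℕ∞) G →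
      (∀ t, deriv η t = 2 * α t * β t) →
      (∀ t, deriv F t = -(β t) * cos (η t)) →
      (∀ t, deriv G t = -(β t) * sin (η t)) →
      X t₀ = ((F t₀ : ℂ) - Complex.I * (G t₀ : ℂ)) *
        ((cos (η t₀) : ℝ) + Complex.I * ((sin (η t₀) : ℝ) : ℂ)) →
      (∀ t : ℝ, X t = ((F t : ℂ) - Complex.I * (G t : ℂ)) *
        (((cos (η t) : ℝ) : ℂ) + Complex.I * ((sin (η t) : ℝ) : ℂ))) ∧
      (∀ t : ℝ, x t * cos (φ t) = F t * sin (η t) - G t * cos (η t)) ∧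
      (∀ t : ℝ, x t * sin (φ t) = F t * cos (η t) + G t * sin (η t)) ∧
      (∀ t : ℝ, x t ^ 2 = F t ^ 2 + G t ^ 2)) := by
  have hasDerivAt_of_contDiff {f : ℝ → ℝ} (hf : ContDiff ℝ (⊤ : ℕ∞) f) (t : ℝ) :
      HasDerivAt f (deriv f t) t :=
    (hf.differentiable (by simp) t).hasDerivAt
  have hXode : ∀ t, HasDerivAt X (2 * Complex.I * α t * β t * X t - β t) t := by
    have hXexp : X = fun t => Complex.I * x t * Complex.exp (-(φ t * Complex.I)) :=
      funext fun t => (hX t).trans (ofReal_mul_sin_add_I_mul_ofReal_mul_cos _ _)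
    intro t
    rw [hXexp]
    exact hasDerivAt_profile_of_H_eq_mul_J (hdx t ▸ hasDerivAt_of_contDiff hx t)
      (hasDerivAt_of_contDiff hφ t) (hHJ t)
  refine ⟨fun t => by rw [(hXode t).deriv]; ring, ?_⟩
  intro η F G hη hF hG hdη hdF hdG h₀
  have hXY : ∀ t, X t = ((F t : ℂ) - Complex.I * (G t : ℂ)) *
      (((cos (η t) : ℝ) : ℂ) + Complex.I * ((sin (η t) : ℝ) : ℂ)) := by
    simp only [ofReal_cos_add_I_mul_ofReal_sin] at h₀ ⊢
    have hηI : ∀ t, HasDerivAt (fun t => (η t : ℂ) * Complex.I) (2 * Complex.I * α t * β t) t :=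
      fun t => ((hdη t ▸ hasDerivAt_of_contDiff hη t).ofReal_comp.mul_const _).congr_deriv
        (by push_cast; ring)
    have hYode : ∀ t, HasDerivAt (fun t => ((F t : ℂ) - Complex.I * G t) *
        Complex.exp (η t * Complex.I)) (2 * Complex.I * α t * β t * (((F t : ℂ) -
          Complex.I * G t) * Complex.exp (η t * Complex.I)) - β t) t :=
      fun t => (hasDerivAt_sub_I_mul_mul_exp_mul_I (hdF t ▸ hasDerivAt_of_contDiff hF t)
        (hdG t ▸ hasDerivAt_of_contDiff hG t) (hdη t ▸ hasDerivAt_of_contDiff hη t)).congr_deriv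
        (by push_cast; ring)
    exact congrFun (eq_of_hasDerivAt_eq_mul_sub hηI hXode hYode h₀)
  have hparts := fun t => mul_cos_eq_and_mul_sin_eq_of_eq ((hX t).symm.trans (hXY t))
  exact ⟨hXY, fun t => (hparts t).1, fun t => (hparts t).2,
    fun t => sq_eq_sq_add_sq_of_mul_cos_of_mul_sin (hparts t).1 (hparts t).2⟩

/-- Let `(γ, ν)` be a Legendre curve with `γ = (x, z)`,
`ν = (cos φ, sin φ)`, curvature `(φ̇, β)`, `x t₀ > 0`, and let `α` be smooth with
`H = αJ` (`H = (xφ̇ + β cos φ)/2`, `J = -βx`).  Then `X = x sin φ + i x cos φ` solves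
`Ẋ - 2iαβX = -β`; consequently, if `η̇ = 2αβ`, `Ḟ = -β cos η`, `Ġ = -β sin η` and
`X(t₀) = (F(t₀) - iG(t₀))(cos η(t₀) + i sin η(t₀))`, then
`X = (F - iG)(cos η + i sin η)` everywhere; in particular
`x cos φ = F sin η - G cos η`, `x sin φ = F cos η + G sin η` and `x² = F² + G²`. -/
theorem profile_curve_from_mean_curvature_ratio
    (x z φ β α : ℝ → ℝ) (t₀ : ℝ)
    (hx : ContDiff ℝ (⊤ : ℕ∞) x) (hz : ContDiff ℝ (⊤ : ℕ∞) z)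
    (hφ : ContDiff ℝ (⊤ : ℕ∞) φ) (hβ : ContDiff ℝ (⊤ : ℕ∞) β)
    (hα : ContDiff ℝ (⊤ : ℕ∞) α)
    (hdx : ∀ t, deriv x t = -(β t) * sin (φ t))
    (hdz : ∀ t, deriv z t = β t * cos (φ t))
    (hx0 : x t₀ > 0)
    -- H = α J, where H = (xφ̇ + β cos φ)/2 and J = -βx
    (hHJ : ∀ t, (x t * deriv φ t + β t * cos (φ t)) / 2 = α t * (-(β t) * x t))
    (X : ℝ → ℂ)
    (hX : ∀ t, X t = ((x t * sin (φ t) : ℝ) : ℂ) +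
      Complex.I * ((x t * cos (φ t) : ℝ) : ℂ)) :
    (∀ t : ℝ, deriv X t - 2 * Complex.I * (α t : ℂ) * (β t : ℂ) * X t = -(β t : ℂ)) ∧
    (∀ η F G : ℝ → ℝ,
      ContDiff ℝ (⊤ : ℕ∞) η → ContDiff ℝ (⊤ : ℕ∞) F → ContDiff ℝ (⊤ : ℕ∞) G →
      (∀ t, deriv η t = 2 * α t * β t) →
      (∀ t, deriv F t = -(β t) * cos (η t)) →
      (∀ t, deriv G t = -(β t) * sin (η t)) →
      X t₀ = ((F t₀ : ℂ) - Complex.I * (G t₀ : ℂ)) *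
        ((cos (η t₀) : ℝ) + Complex.I * ((sin (η t₀) : ℝ) : ℂ)) →
      (∀ t : ℝ, X t = ((F t : ℂ) - Complex.I * (G t : ℂ)) *
        (((cos (η t) : ℝ) : ℂ) + Complex.I * ((sin (η t) : ℝ) : ℂ))) ∧
      (∀ t : ℝ, x t * cos (φ t) = F t * sin (η t) - G t * cos (η t)) ∧
      (∀ t : ℝ, x t * sin (φ t) = F t * cos (η t) + G t * sin (η t)) ∧
      (∀ t : ℝ, x t ^ 2 = F t ^ 2 + G t ^ 2)) :=
  profile_curve_from_mean_curvature_ratio_general x φ β α t₀ hx hφ hdx hHJ X hX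
end

section
/- Let (γ,ν): (I,t₀) → ℝ² × S¹ be a Legendre curve with γ(t)=(x(t),z(t)), ν(t)=(cos φ(t), sin φ(t)) and curvature (φ̇,β), and suppose x(t₀) > 0. Given the smooth function J(t) = −β(t)x(t), one has (d/dt)(x(t)²) = 2J(t)sin φ(t), hence x(t) = (x(t₀)² + 2∫_{t₀}^{t} J(s)sin φ(s) ds)^{1/2} near t₀, and z(t) = z(t₀) − ∫_{t₀}^{t} (J(s)/x(s))cos φ(s) ds. -/
open Real

/-- Let `(γ, ν)` be a Legendre curve with `γ = (x, z)`,
`ν = (cos φ, sin φ)`, curvature `(φ̇, β)`, and `x t₀ > 0`.  Given `J = -βx`, one has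
`(x²)' = 2J sin φ`, hence `x(t) = √(x(t₀)² + 2∫_{t₀}^t J sin φ)` near `t₀`, and
`z(t) = z(t₀) - ∫_{t₀}^t (J/x) cos φ` near `t₀`. -/
theorem profile_curve_from_given_J
    (x z φ β J : ℝ → ℝ) (t₀ : ℝ)
    (hx : ContDiff ℝ (⊤ : ℕ∞) x) (hz : ContDiff ℝ (⊤ : ℕ∞) z)
    (hφ : ContDiff ℝ (⊤ : ℕ∞) φ) (hβ : ContDiff ℝ (⊤ : ℕ∞) β)
    (hdx : ∀ t, deriv x t = -(β t) * sin (φ t))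
    (hdz : ∀ t, deriv z t = β t * cos (φ t))
    (hJ : ∀ t, J t = -(β t) * x t)
    (hx0 : x t₀ > 0) :
    (∀ t : ℝ, deriv (fun s => x s ^ 2) t = 2 * J t * sin (φ t)) ∧
    (∀ᶠ t in nhds t₀,
      x t = Real.sqrt (x t₀ ^ 2 + 2 * ∫ s in t₀..t, J s * sin (φ s))) ∧
    (∀ᶠ t in nhds t₀,
      z t = z t₀ - ∫ s in t₀..t, (J s / x s) * cos (φ s)) := by
  have hxd : Differentiable ℝ x := hx.differentiable (by norm_num)
  have hzd : Differentiable ℝ z := hz.differentiable (by norm_num)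
  have hd1 : ∀ t, deriv (fun s => x s ^ 2) t = 2 * J t * sin (φ t) := by
    intro t
    have h1 : HasDerivAt (fun s => x s ^ 2) (2 * x t ^ 1 * deriv x t) t :=
      (hxd t).hasDerivAt.pow 2 |>.congr_deriv (by norm_num)
    rw [h1.deriv, hdx t, hJ t]; ring
  refine ⟨hd1, ?_, ?_⟩
  -- find neighborhood where x > 0
  · have hcont : Continuous x := hx.continuous
    obtain ⟨ε, hε, hball⟩ := Metric.eventually_nhds_iff.mp
      ((hcont.tendsto t₀).eventually (eventually_gt_nhds hx0))
    rw [Metric.eventually_nhds_iff]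
    refine ⟨ε, hε, fun t ht => ?_⟩
    have hsub : Set.uIcc t₀ t ⊆ Metric.ball t₀ ε := by
      intro s hs
      exact (convex_ball t₀ ε).ordConnected.uIcc_subset (Metric.mem_ball_self hε)
        (by simpa [Metric.mem_ball] using ht) hs
    have hftc : (∫ s in t₀..t, deriv (fun u => x u ^ 2) s)
        = x t ^ 2 - x t₀ ^ 2 := by
      apply intervalIntegral.integral_deriv_eq_sub
      · intro s _; exact (hxd s).pow 2
      · have : Continuous fun s => deriv (fun u => x u ^ 2) s := by
          have heq : (fun s => deriv (fun u => x u ^ 2) s)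
              = fun s => 2 * J s * sin (φ s) := funext hd1
          rw [heq, show J = fun s => -(β s) * x s from funext hJ]
          exact (continuous_const.mul ((hβ.continuous.neg).mul hx.continuous)).mul
            (Real.continuous_sin.comp hφ.continuous)
        exact this.intervalIntegrable _ _
    have hint : (∫ s in t₀..t, deriv (fun u => x u ^ 2) s)
        = 2 * ∫ s in t₀..t, J s * sin (φ s) := by
      rw [show (fun s => deriv (fun u => x u ^ 2) s)
          = fun s => 2 * (J s * sin (φ s)) from funext (fun s => by rw [hd1 s]; ring)]
      exact intervalIntegral.integral_const_mul 2 _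
    have hxt : x t > 0 := hball (by simpa [Metric.mem_ball] using ht)
    have : x t₀ ^ 2 + 2 * ∫ s in t₀..t, J s * sin (φ s) = x t ^ 2 := by
      rw [← hint, hftc]; ring
    rw [this, Real.sqrt_sq hxt.le]
  · have hcont : Continuous x := hx.continuous
    obtain ⟨ε, hε, hball⟩ := Metric.eventually_nhds_iff.mp
      ((hcont.tendsto t₀).eventually (eventually_gt_nhds hx0))
    rw [Metric.eventually_nhds_iff]
    refine ⟨ε, hε, fun t ht => ?_⟩
    have hsub : Set.uIcc t₀ t ⊆ Metric.ball t₀ ε :=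
      (convex_ball t₀ ε).ordConnected.uIcc_subset (Metric.mem_ball_self hε)
        (by simpa [Metric.mem_ball] using ht)
    have hcongr : (∫ s in t₀..t, (J s / x s) * cos (φ s))
        = ∫ s in t₀..t, -(β s * cos (φ s)) := by
      apply intervalIntegral.integral_congr
      intro s hs
      have hxs : x s > 0 := hball (hsub hs)
      have : J s / x s = -(β s) := by
        rw [hJ s]; field_simp
      simp only [this]; ring
    have hftc : (∫ s in t₀..t, β s * cos (φ s)) = z t - z t₀ := by
      have : (∫ s in t₀..t, deriv z s) = z t - z t₀ := by
        apply intervalIntegral.integral_deriv_eq_sub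
        · intro s _; exact hzd s
        · have heq : deriv z = fun s => β s * cos (φ s) := funext hdz
          rw [heq]
          exact ((hβ.continuous).mul (Real.continuous_cos.comp hφ.continuous)).intervalIntegrable _ _
      rw [← this]
      exact intervalIntegral.integral_congr (fun s _ => (hdz s).symm)
    rw [hcongr, intervalIntegral.integral_neg, hftc]; ring
end

section
/- Let (γ,ν): (I,t₀) → ℝ² × S¹ be a Legendre curve with γ(t)=(x(t),z(t)), ν(t)=(cos φ(t), sin φ(t)) and curvature (φ̇,β), and suppose cos φ(t₀) ≠ 0. With H(t) = (x(t)φ̇(t) + β(t)cos φ(t))/2, the function x satisfies the first order linear ODE cos φ(t)·ẋ(t) − φ̇(t)sin φ(t)·x(t) = −2H(t)sin φ(t); equivalently (d/dt)(x(t)cos φ(t)) = −2H(t)sin φ(t), so near t₀, x(t) = (1/cos φ(t))(x(t₀)cos φ(t₀) − ∫_{t₀}^{t} 2H(s)sin φ(s) ds), and ż(t) = 2H(t) − φ̇(t)x(t), so z(t) = z(t₀) + ∫_{t₀}^{t} (2H(s) − φ̇(s)x(s)) ds. -/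
open Real

/-!
The Legendre relations `ẋ = -β sin φ`, `ż = β cos φ` together with `2H = xφ̇ + β cos φ` eliminate
`β`: the product rule gives
`(x cos φ)' = cos φ · ẋ - φ̇ sin φ · x = -2H sin φ` and `ż = 2H - φ̇x`. The two integral formulas are
the fundamental theorem of calculus for the `C¹` functions `x cos φ` and `z`, divided by `cos φ`,
which does not vanish near `t₀`.
-/

theorem ContDiff.intervalIntegral_deriv_eq_sub {E : Type*} [NormedAddCommGroup E]
    [NormedSpace ℝ E] [CompleteSpace E] {f : ℝ → E} (hf : ContDiff ℝ 1 f) (a b : ℝ) :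
    ∫ t in a..b, deriv f t = f b - f a :=
  intervalIntegral.integral_deriv_eq_sub (fun t _ => hf.differentiable one_ne_zero t)
    ((hf.continuous_deriv le_rfl).intervalIntegrable a b)

theorem deriv_mul_cos_comp {x φ : ℝ → ℝ} {t : ℝ} (hx : DifferentiableAt ℝ x t)
    (hφ : DifferentiableAt ℝ φ t) :
    deriv (fun s => x s * cos (φ s)) t = cos (φ t) * deriv x t - deriv φ t * sin (φ t) * x t := by
  rw [deriv_fun_mul hx hφ.cos, deriv_cos hφ]
  ring

theorem profile_curve_from_given_H_general
    (x z φ β H : ℝ → ℝ) (t₀ : ℝ)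
    (hx : ContDiff ℝ (⊤ : ℕ∞) x) (hz : ContDiff ℝ (⊤ : ℕ∞) z)
    (hφ : ContDiff ℝ (⊤ : ℕ∞) φ)
    (hdx : ∀ t, deriv x t = -(β t) * sin (φ t))
    (hdz : ∀ t, deriv z t = β t * cos (φ t))
    (hH : ∀ t, H t = (x t * deriv φ t + β t * cos (φ t)) / 2)
    (hcos0 : cos (φ t₀) ≠ 0) :
    (∀ t : ℝ,
      cos (φ t) * deriv x t - deriv φ t * sin (φ t) * x t = -2 * H t * sin (φ t)) ∧
    (∀ t : ℝ, deriv (fun s => x s * cos (φ s)) t = -2 * H t * sin (φ t)) ∧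
    (∀ᶠ t in nhds t₀,
      x t = (x t₀ * cos (φ t₀) - ∫ s in t₀..t, 2 * H s * sin (φ s)) / cos (φ t)) ∧
    (∀ t : ℝ, deriv z t = 2 * H t - deriv φ t * x t) ∧
    (∀ t : ℝ, z t = z t₀ + ∫ s in t₀..t, (2 * H s - deriv φ s * x s)) := by
  have hx1 : ContDiff ℝ 1 x := hx.of_le (by exact_mod_cast le_top)
  have hz1 : ContDiff ℝ 1 z := hz.of_le (by exact_mod_cast le_top)
  have hφ1 : ContDiff ℝ 1 φ := hφ.of_le (by exact_mod_cast le_top)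
  have hODE : ∀ t, cos (φ t) * deriv x t - deriv φ t * sin (φ t) * x t
      = -2 * H t * sin (φ t) := fun t => by rw [hdx, hH]; ring
  have hderiv_xcos : ∀ t, deriv (fun s => x s * cos (φ s)) t = -2 * H t * sin (φ t) :=
    fun t => by
      rw [deriv_mul_cos_comp (hx1.differentiable one_ne_zero t)
        (hφ1.differentiable one_ne_zero t), hODE]
  have hdz' : ∀ t, deriv z t = 2 * H t - deriv φ t * x t := fun t => by rw [hdz, hH]; ring
  refine ⟨hODE, hderiv_xcos, ?_, hdz', fun t => ?_⟩
  · have hftc : ∀ t, x t * cos (φ t) - x t₀ * cos (φ t₀)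
        = -∫ s in t₀..t, 2 * H s * sin (φ s) := fun t => by
      rw [← (hx1.mul hφ1.cos).intervalIntegral_deriv_eq_sub, ← intervalIntegral.integral_neg]
      exact intervalIntegral.integral_congr fun s _ => by simp only [hderiv_xcos]; ring
    filter_upwards [(continuous_cos.comp hφ.continuous).continuousAt.eventually_ne hcos0]
      with t (hcos : cos (φ t) ≠ 0)
    rw [eq_div_iff hcos]
    linarith [hftc t]
  · rw [← intervalIntegral.integral_congr fun s _ => hdz' s, hz1.intervalIntegral_deriv_eq_sub]
    ring

/-- Let `(γ, ν)` be a Legendre curve with `γ = (x, z)`,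
`ν = (cos φ, sin φ)`, curvature `(φ̇, β)`, and `cos φ(t₀) ≠ 0`.  With
`H = (xφ̇ + β cos φ)/2`, the function `x` satisfies
`cos φ · ẋ - φ̇ sin φ · x = -2H sin φ`, equivalently `(x cos φ)' = -2H sin φ`, so near
`t₀`, `x(t) = (x(t₀)cos φ(t₀) - ∫_{t₀}^t 2H sin φ)/cos φ(t)`; also `ż = 2H - φ̇x`, so
`z(t) = z(t₀) + ∫_{t₀}^t (2H - φ̇x)`. -/
theorem profile_curve_from_given_H
    (x z φ β H : ℝ → ℝ) (t₀ : ℝ)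
    (hx : ContDiff ℝ (⊤ : ℕ∞) x) (hz : ContDiff ℝ (⊤ : ℕ∞) z)
    (hφ : ContDiff ℝ (⊤ : ℕ∞) φ) (hβ : ContDiff ℝ (⊤ : ℕ∞) β)
    (hdx : ∀ t, deriv x t = -(β t) * sin (φ t))
    (hdz : ∀ t, deriv z t = β t * cos (φ t))
    (hH : ∀ t, H t = (x t * deriv φ t + β t * cos (φ t)) / 2)
    (hcos0 : cos (φ t₀) ≠ 0) :
    (∀ t : ℝ,
      cos (φ t) * deriv x t - deriv φ t * sin (φ t) * x t = -2 * H t * sin (φ t)) ∧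
    (∀ t : ℝ, deriv (fun s => x s * cos (φ s)) t = -2 * H t * sin (φ t)) ∧
    (∀ᶠ t in nhds t₀,
      x t = (x t₀ * cos (φ t₀) - ∫ s in t₀..t, 2 * H s * sin (φ s)) / cos (φ t)) ∧
    (∀ t : ℝ, deriv z t = 2 * H t - deriv φ t * x t) ∧
    (∀ t : ℝ, z t = z t₀ + ∫ s in t₀..t, (2 * H s - deriv φ s * x s)) :=
  profile_curve_from_given_H_general x z φ β H t₀ hx hz hφ hdx hdz hH hcos0
end

section
/- Let (γ,ν): I → ℝ² × S¹ be a Legendre curve with γ(t)=(x(t),z(t)), ν(t)=(a(t),b(t)) and curvature (ℓ,β). Suppose K(t) = −a(t)ℓ(t) ≠ 0 for all t ∈ I (so a(t) ≠ 0 and ℓ(t) ≠ 0 for all t). Then for all t and λ, K(t)λ² − 2H(t)λ + J(t) = −(a(t)λ + x(t))(ℓ(t)λ + β(t)), where J = −βx and H = (xℓ + βa)/2; hence the solutions of Kλ² − 2Hλ + J = 0 are λ = −β(t)/ℓ(t) and λ = −x(t)/a(t). Moreover, the evolute 𝐳(t,θ) − (β(t)/ℓ(t))𝐧ᶻ(t,θ)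 equals the surface of revolution around the z-axis of the evolute 𝓔v(γ)(t) = γ(t) − (β(t)/ℓ(t))ν(t) of the front, and the other evolute 𝐳(t,θ) − (x(t)/a(t))𝐧ᶻ(t,θ) equals (0, 0, z(t) − x(t)b(t)/a(t)). -/
open Real

/-- Let `(γ, ν)` be a Legendre curve with `γ = (x, z)`, `ν = (a, b)`,
curvature `(ℓ, β)`, and suppose `K = -aℓ ≠ 0` everywhere.  Then
`Kλ² - 2Hλ + J = -(aλ + x)(ℓλ + β)` (with `J = -βx`, `H = (xℓ + βa)/2`), so the
solutions of `Kλ² - 2Hλ + J = 0` are `λ = -β/ℓ` and `λ = -x/a`.  The evolute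
`𝐳 - (β/ℓ)𝐧ᶻ` is the surface of revolution of the evolute `γ - (β/ℓ)ν`, and the other
evolute `𝐳 - (x/a)𝐧ᶻ` is `(0, 0, z - xb/a)`. -/
theorem evolutes_of_surface_of_revolution
    (x z a b ℓ β : ℝ → ℝ)
    (hx : ContDiff ℝ (⊤ : ℕ∞) x) (hz : ContDiff ℝ (⊤ : ℕ∞) z)
    (ha : ContDiff ℝ (⊤ : ℕ∞) a) (hb : ContDiff ℝ (⊤ : ℕ∞) b)
    (hunit : ∀ t, a t ^ 2 + b t ^ 2 = 1)
    (hdx : ∀ t, deriv x t = -(β t) * b t)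
    (hdz : ∀ t, deriv z t = β t * a t)
    (hda : ∀ t, deriv a t = -(ℓ t) * b t)
    (hdb : ∀ t, deriv b t = ℓ t * a t)
    -- K^z_F = -aℓ is nowhere zero
    (hK : ∀ t, a t * ℓ t ≠ 0)
    (Z N : ℝ → ℝ → ℝ × ℝ × ℝ)
    (hZ : ∀ t θ, Z t θ = (x t * cos θ, x t * sin θ, z t))
    (hN : ∀ t θ, N t θ = (a t * cos θ, a t * sin θ, b t)) :
    (∀ t lam : ℝ,
      (-(a t) * ℓ t) * lam ^ 2 - 2 * ((x t * ℓ t + β t * a t) / 2) * lam +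
          (-(β t) * x t) =
        -((a t * lam + x t) * (ℓ t * lam + β t))) ∧
    (∀ t lam : ℝ,
      (-(a t) * ℓ t) * lam ^ 2 - 2 * ((x t * ℓ t + β t * a t) / 2) * lam +
          (-(β t) * x t) = 0 ↔
        (lam = -(β t) / ℓ t ∨ lam = -(x t) / a t)) ∧
    (∀ t θ : ℝ,
      Z t θ - (β t / ℓ t) • N t θ =
        ((x t - (β t / ℓ t) * a t) * cos θ,
         (x t - (β t / ℓ t) * a t) * sin θ,
         z t - (β t / ℓ t) * b t)) ∧
    (∀ t θ : ℝ,
      Z t θ - (x t / a t) • N t θ = (0, 0, z t - x t * b t / a t)) := by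
  refine ⟨fun t lam => by ring, fun t lam => ?_, fun t θ => ?_, fun t θ => ?_⟩
  · have ha0 : a t ≠ 0 := fun h => hK t (by simp [h])
    have hl0 : ℓ t ≠ 0 := fun h => hK t (by simp [h])
    constructor
    · intro h
      have h2 : (a t * lam + x t) * (ℓ t * lam + β t) = 0 := by nlinarith [h]
      rcases mul_eq_zero.mp h2 with h3 | h3
      · right; field_simp; linarith
      · left; field_simp; linarith
    · rintro (rfl | rfl) <;> field_simp <;> ring
  · have ha0 : a t ≠ 0 := fun h => hK t (by simp [h])
    have hl0 : ℓ t ≠ 0 := fun h => hK t (by simp [h])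
    rw [hZ, hN]
    refine Prod.ext ?_ (Prod.ext ?_ ?_) <;> simp [smul_eq_mul] <;> ring
  · have ha0 : a t ≠ 0 := fun h => hK t (by simp [h])
    rw [hZ, hN]
    refine Prod.ext ?_ (Prod.ext ?_ ?_) <;> simp [smul_eq_mul] <;> field_simp <;> ring
end

section
/- Let γ=(x,z): (I,t₀) → (ℝ²,(x₀,z₀)) and γ̃=(x̃,z̃): (Ĩ,t̃₀) → (ℝ²,(x̃₀,z̃₀)) be smooth curves with x₀ > 0 and x̃₀ > 0, and let 𝐳(t,θ)=(x(t)cosθ, x(t)sinθ, z(t)) and 𝐳̃ be their surfaces of revolution around the z-axis. Suppose there exist a diffeomorphism germ Φ: (I×[0,2π),(t₀,θ₀)) → (Ĩ×[0,2π),(t̃₀,θ₀)) of the form Φ(t,θ) = (φ(t),θ) and a diffeomorphism germ Ψ = (Ψ₁,Ψ₂,Ψ₃): ((ℝ²∖{0})×ℝ, 𝐳(t₀,θ₀)) → ((ℝ²∖{0})×ℝ, 𝐳̃(t̃₀,θ₀)) such that Ψ∘𝐳 = 𝐳̃∘Φ. Then φ is a diffeomorphism germ and the map ψ = (ψ₁,ψ₂),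 defined by ψ₁(X,Z) = Ψ₁(Xcosθ₀, Xsinθ₀, Z)cosθ₀ + Ψ₂(Xcosθ₀, Xsinθ₀, Z)sinθ₀ and ψ₂(X,Z) = Ψ₃(Xcosθ₀, Xsinθ₀, Z), is a diffeomorphism germ at (x₀,z₀) with ψ∘γ = γ̃∘φ near t₀. -/
open Real

/-!
Write `B θ` for the meridian embedding `(X, Z) ↦ (X cos θ, X sin θ, Z)` and `A θ` for its
orthogonal left inverse, so that `𝐳(t, θ) = B θ (γ t)` and `ψ = A θ₀ ∘ Ψ ∘ B θ₀`. Restricting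
`Φ` and the relation `Ψ ∘ 𝐳 = 𝐳' ∘ Φ` to the meridian `θ = θ₀` gives that `φ` is a diffeomorphism
germ and that `ψ ∘ γ = γ' ∘ φ`.

By the inverse function theorem, `ψ` is a diffeomorphism germ once `A θ₀ ∘ DΨ ∘ B θ₀` is injective.
Differentiating the relation along the parallel through `𝐳(t₀, θ₀)` shows that `DΨ` sends
`x₀ ν` to `x₀' ν`, where `ν` is the unit normal of the meridian plane, spanning `ker (A θ₀)`.
As `DΨ` is injective and `x₀' ≠ 0`, a meridian vector mapped into `ker (A θ₀)` must itself be
a multiple of `ν`, hence zero.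
-/

open Real Filter Topology Set

section DiffeoGerm

variable {E F : Type*} [NormedAddCommGroup E] [NormedSpace ℝ E]
  [NormedAddCommGroup F] [NormedSpace ℝ F]

theorem OpenPartialHomeomorph.diffeoGermAt (e : OpenPartialHomeomorph E F) {p : E}
    (hp : p ∈ e.source) (he : ContDiffOn ℝ (⊤ : ℕ∞) e e.source)
    (he' : ContDiffOn ℝ (⊤ : ℕ∞) e.symm e.target) : DiffeoGermAt e p (e p) :=
  ⟨rfl, e.source, e.target, e.symm, e.open_source, hp, e.open_target, e.map_source hp, he, he',
    e.mapsTo, e.mapsTo_symm, fun _ => e.left_inv, fun _ => e.right_inv⟩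

theorem DiffeoGermAt.of_contDiffOn_of_hasFDerivAt [CompleteSpace E] {f : E → F} {U : Set E}
    {p : E} {f' : E ≃L[ℝ] F} (hU : IsOpen U) (hp : p ∈ U) (hf : ContDiffOn ℝ (⊤ : ℕ∞) f U)
    (hf' : HasFDerivAt f (f' : E →L[ℝ] F) p) : DiffeoGermAt f p (f p) := by
  have hfp : ContDiffAt ℝ (⊤ : ℕ∞) f p := hf.contDiffAt (hU.mem_nhds hp)
  -- The inverse is smooth wherever the derivative of `f` is invertible, an open condition.
  set S := U ∩ fderiv ℝ f ⁻¹' range ((↑) : (E ≃L[ℝ] F) → E →L[ℝ] F)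
  have hS : IsOpen S := (hf.continuousOn_fderiv_of_isOpen hU (by simp)).isOpen_inter_preimage
    hU ContinuousLinearEquiv.isOpen
  let e := (hfp.toOpenPartialHomeomorph f hf' (by simp)).restrOpen S hS
  have hpe : p ∈ e.source := ⟨hfp.mem_toOpenPartialHomeomorph_source hf' _, hp, f', hf'.fderiv.symm⟩
  refine e.diffeoGermAt hpe (hf.mono fun y hy => hy.2.1) fun q hq => ?_
  obtain ⟨hqU, g', hg'⟩ := hq.2
  have hfq : ContDiffAt ℝ (⊤ : ℕ∞) f (e.symm q) := hf.contDiffAt (hU.mem_nhds hqU)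
  have hf'q : HasFDerivAt f (g' : E →L[ℝ] F) (e.symm q) :=
    hg' ▸ (hfq.differentiableAt (by simp)).hasFDerivAt
  exact (e.contDiffAt_symm hq hf'q hfq).contDiffWithinAt

variable {f : E → F} {p : E} {q : F}

theorem DiffeoGermAt.contDiffAt (h : DiffeoGermAt f p q) : ContDiffAt ℝ (⊤ : ℕ∞) f p := by
  obtain ⟨-, U, -, -, hU, hpU, -, -, hf, -⟩ := h
  exact hf.contDiffAt (hU.mem_nhds hpU)

theorem DiffeoGermAt.hasFDerivAt (h : DiffeoGermAt f p q) : HasFDerivAt f (fderiv ℝ f p) p :=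
  (h.contDiffAt.differentiableAt (by simp)).hasFDerivAt

theorem DiffeoGermAt.injective_fderiv (h : DiffeoGermAt f p q) :
    Function.Injective (fderiv ℝ f p) := by
  have hf' := h.hasFDerivAt
  obtain ⟨rfl, U, V, g, hU, hpU, hV, hqV, -, hg, -, -, hgf, -⟩ := h
  have hg' : HasFDerivAt g (fderiv ℝ g (f p)) (f p) :=
    ((hg.contDiffAt (hV.mem_nhds hqV)).differentiableAt (by simp)).hasFDerivAt
  have hgf' : (fderiv ℝ g (f p)).comp (fderiv ℝ f p) = ContinuousLinearMap.id ℝ E :=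
    ((hg'.comp p hf').congr_of_eventuallyEq (eventually_of_mem (hU.mem_nhds hpU)
      fun y hy => (hgf y hy).symm)).unique (hasFDerivAt_id p)
  exact Function.LeftInverse.injective fun v => congrArg (· v) hgf'

theorem DiffeoGermAt.of_prodMap_id {G : Type*} [NormedAddCommGroup G] [NormedSpace ℝ G] {b : G}
    (h : DiffeoGermAt (fun x : E × G => (f x.1, x.2)) (p, b) (q, b)) : DiffeoGermAt f p q := by
  obtain ⟨hpq, U, V, g, hU, hpU, hV, hqV, hf, hg, hfUV, hgVU, hgf, hfg⟩ := h
  refine ⟨congrArg Prod.fst hpq, (·, b) ⁻¹' U, (·, b) ⁻¹' V, fun y => (g (y, b)).1,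
    hU.preimage (by fun_prop), hpU, hV.preimage (by fun_prop), hqV,
    contDiff_fst.comp_contDiffOn
      (hf.comp (contDiff_prodMk_left b).contDiffOn (mapsTo_preimage _ _)),
    contDiff_fst.comp_contDiffOn
      (hg.comp (contDiff_prodMk_left b).contDiffOn (mapsTo_preimage _ _)),
    fun y hy => hfUV hy, fun y hy => ?_, fun y hy => congrArg Prod.fst (hgf _ hy),
    fun y hy => congrArg Prod.fst (hfg _ hy)⟩
  have hgb : (g (y, b)).2 = b := congrArg Prod.snd (hfg _ hy)
  have hgy : ((g (y, b)).1, b) = g (y, b) := Prod.ext rfl hgb.symm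
  rw [mem_preimage, hgy]
  exact hgVU hy

end DiffeoGerm

theorem LinearMap.injective_comp_comp_of_ker_le_span {R M N N' P : Type*} [Ring R]
    [AddCommGroup M] [Module R M] [AddCommGroup N] [Module R N] [AddCommGroup N'] [Module R N']
    [AddCommGroup P] [Module R P] {A : N' →ₗ[R] P} {L : N →ₗ[R] N'} {B : M →ₗ[R] N} {v : N}
    (hL : Function.Injective L) (hA : ker A ≤ R ∙ L v) (hB : ∀ u, B u ∈ R ∙ v → u = 0) :
    Function.Injective (A ∘ₗ L ∘ₗ B) := by
  refine (injective_iff_map_eq_zero _).2 fun u hu => hB u ?_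
  obtain ⟨a, ha⟩ := Submodule.mem_span_singleton.1 (hA hu)
  exact Submodule.mem_span_singleton.2 ⟨a, hL (by rw [map_smul, ha]; rfl)⟩

noncomputable def meridianEmbedding (θ : ℝ) : ℝ × ℝ →L[ℝ] ℝ × ℝ × ℝ :=
  (cos θ • ContinuousLinearMap.fst ℝ ℝ ℝ).prod
    ((sin θ • ContinuousLinearMap.fst ℝ ℝ ℝ).prod (ContinuousLinearMap.snd ℝ ℝ ℝ))

@[simp]
theorem meridianEmbedding_apply (θ : ℝ) (p : ℝ × ℝ) :
    meridianEmbedding θ p = (p.1 * cos θ, p.1 * sin θ, p.2) := by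
  simp [meridianEmbedding, mul_comm]

noncomputable def meridianProjection (θ : ℝ) : ℝ × ℝ × ℝ →L[ℝ] ℝ × ℝ :=
  (cos θ • ContinuousLinearMap.fst ℝ ℝ (ℝ × ℝ) +
      sin θ • (ContinuousLinearMap.fst ℝ ℝ ℝ).comp (ContinuousLinearMap.snd ℝ ℝ (ℝ × ℝ))).prod
    ((ContinuousLinearMap.snd ℝ ℝ ℝ).comp (ContinuousLinearMap.snd ℝ ℝ (ℝ × ℝ)))

@[simp]
theorem meridianProjection_apply (θ : ℝ) (q : ℝ × ℝ × ℝ) :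
    meridianProjection θ q = (q.1 * cos θ + q.2.1 * sin θ, q.2.2) := by
  simp [meridianProjection, mul_comm]

noncomputable def meridianNormal (θ : ℝ) : ℝ × ℝ × ℝ := (-sin θ, cos θ, 0)

theorem meridianProjection_meridianEmbedding (θ : ℝ) (p : ℝ × ℝ) :
    meridianProjection θ (meridianEmbedding θ p) = p := by
  ext
  · simp only [meridianProjection_apply, meridianEmbedding_apply]
    linear_combination p.1 * cos_sq_add_sin_sq θ
  · simp

theorem ker_meridianProjection (θ : ℝ) :
    LinearMap.ker (meridianProjection θ : ℝ × ℝ × ℝ →ₗ[ℝ] ℝ × ℝ) = ℝ ∙ meridianNormal θ := by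
  refine le_antisymm (fun w hw => ?_) ((Submodule.span_singleton_le_iff_mem _ _).2 ?_)
  · have hw : w.1 * cos θ + w.2.1 * sin θ = 0 ∧ w.2.2 = 0 := by simpa using hw
    refine Submodule.mem_span_singleton.2 ⟨w.2.1 * cos θ - w.1 * sin θ, ?_⟩
    ext <;> simp only [meridianNormal, Prod.smul_mk, smul_eq_mul]
    · linear_combination -cos θ * hw.1 + w.1 * sin_sq_add_cos_sq θ
    · linear_combination -sin θ * hw.1 + w.2.1 * sin_sq_add_cos_sq θ
    · linear_combination -hw.2
  · simp [meridianNormal]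
    ring

theorem eq_zero_of_meridianEmbedding_mem_span {θ : ℝ} {u : ℝ × ℝ}
    (hu : meridianEmbedding θ u ∈ ℝ ∙ meridianNormal θ) : u = 0 := by
  rw [← meridianProjection_meridianEmbedding θ u]
  exact (ker_meridianProjection θ).ge hu

theorem hasDerivAt_meridianEmbedding_angle (p : ℝ × ℝ) (θ : ℝ) :
    HasDerivAt (fun α => meridianEmbedding α p) (p.1 • meridianNormal θ) θ := by
  simpa [meridianNormal] using ((hasDerivAt_cos θ).const_mul p.1).prodMk
    (((hasDerivAt_sin θ).const_mul p.1).prodMk (hasDerivAt_const θ p.2))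

theorem DiffeoGermAt.meridianProjection_comp_comp_meridianEmbedding
    {F : ℝ × ℝ × ℝ → ℝ × ℝ × ℝ} {θ : ℝ} {p q : ℝ × ℝ} (hq : q.1 ≠ 0)
    (hF : DiffeoGermAt F (meridianEmbedding θ p) (meridianEmbedding θ q))
    (hparallel : ∀ᶠ α in 𝓝 θ, F (meridianEmbedding α p) = meridianEmbedding α q) :
    DiffeoGermAt (meridianProjection θ ∘ F ∘ meridianEmbedding θ) p q := by
  set A := meridianProjection θ
  set B := meridianEmbedding θ
  set L := fderiv ℝ F (B p)
  have hL : HasFDerivAt F L (B p) := hF.hasFDerivAt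
  have hLν : L (p.1 • meridianNormal θ) = q.1 • meridianNormal θ :=
    ((hL.comp_hasDerivAt θ (hasDerivAt_meridianEmbedding_angle p θ)).congr_of_eventuallyEq
      (hparallel.mono fun _ => Eq.symm)).unique (hasDerivAt_meridianEmbedding_angle q θ)
  have hinj : Function.Injective (A ∘L L ∘L B) := by
    refine LinearMap.injective_comp_comp_of_ker_le_span (A := (A : ℝ × ℝ × ℝ →ₗ[ℝ] ℝ × ℝ))
      (L := L) (B := B) (v := p.1 • meridianNormal θ) hF.injective_fderiv ?_ fun u hu =>
        eq_zero_of_meridianEmbedding_mem_span (Submodule.span_singleton_smul_le ℝ _ _ hu)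
    rw [ker_meridianProjection, ContinuousLinearMap.coe_coe, hLν,
      Submodule.span_singleton_smul_eq (isUnit_iff_ne_zero.2 hq)]
  let e := (LinearEquiv.ofInjectiveEndo _ hinj).toContinuousLinearEquiv
  have he : HasFDerivAt (A ∘ F ∘ B) (e : ℝ × ℝ →L[ℝ] ℝ × ℝ) p :=
    A.hasFDerivAt.comp p (hL.comp p B.hasFDerivAt)
  obtain ⟨hFpq, U, -, -, hU, hpU, -, -, hFU, -⟩ := hF
  have hψ := DiffeoGermAt.of_contDiffOn_of_hasFDerivAt (hU.preimage B.continuous) hpU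
    (A.contDiff.comp_contDiffOn (hFU.comp B.contDiff.contDiffOn (mapsTo_preimage _ _))) he
  rwa [Function.comp_apply, Function.comp_apply, hFpq, meridianProjection_meridianEmbedding] at hψ

theorem equivalence_of_surfaces_of_revolution_descends_to_profile_curves_general
    (x z x' z' : ℝ → ℝ) (t₀ t₀' θ₀ : ℝ)
    (hx0' : x' t₀' > 0)
    (φ : ℝ → ℝ) (Ψ₁ Ψ₂ Ψ₃ : ℝ × ℝ × ℝ → ℝ)
    (hΦ : DiffeoGermAt (fun p : ℝ × ℝ => (φ p.1, p.2)) (t₀, θ₀) (t₀', θ₀))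
    (hΨ : DiffeoGermAt (fun q : ℝ × ℝ × ℝ => (Ψ₁ q, Ψ₂ q, Ψ₃ q))
      (x t₀ * cos θ₀, x t₀ * sin θ₀, z t₀)
      (x' t₀' * cos θ₀, x' t₀' * sin θ₀, z' t₀'))
    (hcomm : ∀ᶠ p : ℝ × ℝ in nhds (t₀, θ₀),
      (Ψ₁ (x p.1 * cos p.2, x p.1 * sin p.2, z p.1),
       Ψ₂ (x p.1 * cos p.2, x p.1 * sin p.2, z p.1),
       Ψ₃ (x p.1 * cos p.2, x p.1 * sin p.2, z p.1)) =
        (x' (φ p.1) * cos p.2, x' (φ p.1) * sin p.2, z' (φ p.1)))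
    (ψ : ℝ × ℝ → ℝ × ℝ)
    (hψdef : ∀ p : ℝ × ℝ, ψ p =
      (Ψ₁ (p.1 * cos θ₀, p.1 * sin θ₀, p.2) * cos θ₀ +
        Ψ₂ (p.1 * cos θ₀, p.1 * sin θ₀, p.2) * sin θ₀,
       Ψ₃ (p.1 * cos θ₀, p.1 * sin θ₀, p.2))) :
    DiffeoGermAt φ t₀ t₀' ∧
    DiffeoGermAt ψ (x t₀, z t₀) (x' t₀', z' t₀') ∧
    ∀ᶠ t in nhds t₀, ψ (x t, z t) = (x' (φ t), z' (φ t)) := by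
  set F : ℝ × ℝ × ℝ → ℝ × ℝ × ℝ := fun q => (Ψ₁ q, Ψ₂ q, Ψ₃ q)
  have hψ : ψ = meridianProjection θ₀ ∘ F ∘ meridianEmbedding θ₀ := funext fun p => by
    simp [hψdef, F]
  have hsurface : ∀ᶠ p : ℝ × ℝ in 𝓝 (t₀, θ₀),
      F (meridianEmbedding p.2 (x p.1, z p.1)) =
        meridianEmbedding p.2 (x' (φ p.1), z' (φ p.1)) := by
    simpa only [meridianEmbedding_apply] using hcomm
  have hφ₀ : φ t₀ = t₀' := congrArg Prod.fst hΦ.1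
  refine ⟨hΦ.of_prodMap_id, ?_, ?_⟩
  · rw [hψ]
    refine DiffeoGermAt.meridianProjection_comp_comp_meridianEmbedding hx0'.ne'
      (by simpa only [meridianEmbedding_apply] using hΨ) ?_
    simpa [hφ₀] using ((Continuous.prodMk_right t₀).tendsto θ₀).eventually hsurface
  · filter_upwards [((Continuous.prodMk_left θ₀).tendsto t₀).eventually hsurface] with t ht
    rw [hψ, Function.comp_apply, Function.comp_apply, ht, meridianProjection_meridianEmbedding]

/-- Let `γ = (x, z)` and `γ' = (x', z')` be smooth curves with
`x t₀ > 0`, `x' t₀' > 0`, and `𝐳`, `𝐳'` their surfaces of revolution around the z-axis.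
If there are diffeomorphism germs `Φ(t,θ) = (φ t, θ)` and `Ψ = (Ψ₁, Ψ₂, Ψ₃)` with
`Ψ ∘ 𝐳 = 𝐳' ∘ Φ` near `(t₀, θ₀)`, then `φ` is a diffeomorphism germ and
`ψ(X,Z) = (Ψ₁(X cos θ₀, X sin θ₀, Z)cos θ₀ + Ψ₂(X cos θ₀, X sin θ₀, Z)sin θ₀,
Ψ₃(X cos θ₀, X sin θ₀, Z))` is a diffeomorphism germ with `ψ ∘ γ = γ' ∘ φ` near `t₀`. -/
theorem equivalence_of_surfaces_of_revolution_descends_to_profile_curves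
    (x z x' z' : ℝ → ℝ) (t₀ t₀' θ₀ : ℝ)
    (hx : ContDiff ℝ (⊤ : ℕ∞) x) (hz : ContDiff ℝ (⊤ : ℕ∞) z)
    (hx' : ContDiff ℝ (⊤ : ℕ∞) x') (hz' : ContDiff ℝ (⊤ : ℕ∞) z')
    (hx0 : x t₀ > 0) (hx0' : x' t₀' > 0)
    (φ : ℝ → ℝ) (Ψ₁ Ψ₂ Ψ₃ : ℝ × ℝ × ℝ → ℝ)
    (hΦ : DiffeoGermAt (fun p : ℝ × ℝ => (φ p.1, p.2)) (t₀, θ₀) (t₀', θ₀))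
    (hΨ : DiffeoGermAt (fun q : ℝ × ℝ × ℝ => (Ψ₁ q, Ψ₂ q, Ψ₃ q))
      (x t₀ * cos θ₀, x t₀ * sin θ₀, z t₀)
      (x' t₀' * cos θ₀, x' t₀' * sin θ₀, z' t₀'))
    (hcomm : ∀ᶠ p : ℝ × ℝ in nhds (t₀, θ₀),
      (Ψ₁ (x p.1 * cos p.2, x p.1 * sin p.2, z p.1),
       Ψ₂ (x p.1 * cos p.2, x p.1 * sin p.2, z p.1),
       Ψ₃ (x p.1 * cos p.2, x p.1 * sin p.2, z p.1)) =
        (x' (φ p.1) * cos p.2, x' (φ p.1) * sin p.2, z' (φ p.1)))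
    (ψ : ℝ × ℝ → ℝ × ℝ)
    (hψdef : ∀ p : ℝ × ℝ, ψ p =
      (Ψ₁ (p.1 * cos θ₀, p.1 * sin θ₀, p.2) * cos θ₀ +
        Ψ₂ (p.1 * cos θ₀, p.1 * sin θ₀, p.2) * sin θ₀,
       Ψ₃ (p.1 * cos θ₀, p.1 * sin θ₀, p.2))) :
    DiffeoGermAt φ t₀ t₀' ∧
    DiffeoGermAt ψ (x t₀, z t₀) (x' t₀', z' t₀') ∧
    ∀ᶠ t in nhds t₀, ψ (x t, z t) = (x' (φ t), z' (φ t)) :=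
  equivalence_of_surfaces_of_revolution_descends_to_profile_curves_general x z x' z' t₀ t₀' θ₀ hx0'
    φ Ψ₁ Ψ₂ Ψ₃ hΦ hΨ hcomm ψ hψdef
end

section
/- Let (γ,ν): I → ℝ² × S¹ be a Legendre curve with γ(t)=(x(t),z(t)), ν(t)=(a(t),b(t)) and curvature (ℓ,β), satisfying the relation ℓ(t)a(t) = α(t)β(t)x(t) for a smooth function α (i.e., K = αJ for the surface of revolution around the z-axis). Let t₀ be a singular point of γ (so β(t₀) = 0) and suppose x(t₀) ≠ 0, α(t₀) ≠ 0, ord(a)(t₀) = m+1 and ord(β)(t₀) = n+1. Then m ≤ n, and ℓ(t₀) ≠ 0 (equivalently, (γ,ν) is a Legendre immersion at t₀, i.e., γ is a front at t₀) if and only if ord(a)(t₀) = ord(β)(t₀). -/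
/-!
The relation `ℓ a = α β x` computes the order of vanishing at `t₀` of one product in two ways.
Since `α x` does not vanish at `t₀`, the Leibniz rule shows that `β (α x)` vanishes to order
exactly `n + 1`. On the other side `a` vanishes to order `m + 1`, so `a ℓ` vanishes to order at
least `m + 1`, whence `m ≤ n`, and its `(m + 1)`-st derivative at `t₀` is `a⁽ᵐ⁺¹⁾(t₀) ℓ(t₀)`,
which is nonzero exactly when `ℓ(t₀) ≠ 0`.
-/

/-- `OrdAt f t₀ n` : `f` has a zero of order `n` at `t₀`, i.e.
`f(t₀) = f'(t₀) = ⋯ = f^{(n-1)}(t₀) = 0` and `f^{(n)}(t₀) ≠ 0`. -/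
def OrdAt (f : ℝ → ℝ) (t₀ : ℝ) (n : ℕ) : Prop :=
  (∀ k < n, iteratedDeriv k f t₀ = 0) ∧ iteratedDeriv n f t₀ ≠ 0

open Finset

section Leibniz

variable {𝕜 : Type*} [NontriviallyNormedField 𝕜] {𝔸 : Type*} [NormedRing 𝔸] [NormedAlgebra 𝕜 𝔸]
  {f g : 𝕜 → 𝔸} {x : 𝕜} {p : ℕ}

theorem iteratedDeriv_mul_eq_zero_of_forall_lt {k : ℕ} (hf : ContDiffAt 𝕜 k f x)
    (hg : ContDiffAt 𝕜 k g x) (hvan : ∀ i < p, iteratedDeriv i f x = 0) (hk : k < p) :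
    iteratedDeriv k (f * g) x = 0 := by
  rw [iteratedDeriv_mul hf hg]
  refine sum_eq_zero fun i hi => ?_
  rw [hvan i (by rw [mem_range] at hi; omega), mul_zero, zero_mul]

theorem iteratedDeriv_mul_eq_of_forall_lt (hf : ContDiffAt 𝕜 p f x) (hg : ContDiffAt 𝕜 p g x)
    (hvan : ∀ i < p, iteratedDeriv i f x = 0) :
    iteratedDeriv p (f * g) x = iteratedDeriv p f x * g x := by
  rw [iteratedDeriv_mul hf hg, sum_eq_single_of_mem p (self_mem_range_succ p)]
  · simp
  · intro i hi hip
    rw [hvan i (by rw [mem_range] at hi; omega), mul_zero, zero_mul]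

end Leibniz

namespace OrdAt

variable {f g : ℝ → ℝ} {t₀ : ℝ} {p q : ℕ}

theorem eq (hp : OrdAt f t₀ p) (hq : OrdAt f t₀ q) : p = q := by
  by_contra hne
  rcases Nat.lt_or_gt_of_ne hne with hlt | hlt
  · exact hp.2 (hq.1 p hlt)
  · exact hq.2 (hp.1 q hlt)

theorem mul_right (hf : OrdAt f t₀ p) (hfc : ContDiffAt ℝ p f t₀) (hgc : ContDiffAt ℝ p g t₀)
    (hg : g t₀ ≠ 0) : OrdAt (f * g) t₀ p := by
  refine ⟨fun k hk => ?_, ?_⟩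
  · have hkp : (k : WithTop ℕ∞) ≤ p := by exact_mod_cast hk.le
    exact iteratedDeriv_mul_eq_zero_of_forall_lt (hfc.of_le hkp) (hgc.of_le hkp) hf.1 hk
  · rw [iteratedDeriv_mul_eq_of_forall_lt hfc hgc hf.1]
    exact mul_ne_zero hf.2 hg

end OrdAt

theorem ContDiff.contDiffAt_of_top {𝕜 E F : Type*} [NontriviallyNormedField 𝕜]
    [NormedAddCommGroup E] [NormedSpace 𝕜 E] [NormedAddCommGroup F] [NormedSpace 𝕜 F] {f : E → F}
    (hf : ContDiff 𝕜 (⊤ : ℕ∞) f) (k : ℕ) (t : E) : ContDiffAt 𝕜 k f t :=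
  (hf.of_le (by exact_mod_cast le_top)).contDiffAt

theorem front_condition_for_Gauss_curvature_ratio_curve_general
    (x a ℓ β α : ℝ → ℝ) (t₀ : ℝ) (m n : ℕ)
    (hx : ContDiff ℝ (⊤ : ℕ∞) x)
    (ha : ContDiff ℝ (⊤ : ℕ∞) a)
    (hl : ContDiff ℝ (⊤ : ℕ∞) ℓ) (hβc : ContDiff ℝ (⊤ : ℕ∞) β)
    (hα : ContDiff ℝ (⊤ : ℕ∞) α)
    -- K = α J : ℓ a = α β x
    (hrel : ∀ t, ℓ t * a t = α t * β t * x t)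
    (hsing : β t₀ = 0) (hx0 : x t₀ ≠ 0) (hα0 : α t₀ ≠ 0)
    (horda : OrdAt a t₀ (m + 1)) (hordβ : OrdAt β t₀ (n + 1)) :
    m ≤ n ∧
    (ℓ t₀ ≠ 0 ↔ m = n) ∧
    ((ℓ t₀, β t₀) ≠ ((0 : ℝ), (0 : ℝ)) ↔ m = n) := by
  have hprod : a * ℓ = β * (α * x) := funext fun t => by simp only [Pi.mul_apply]; linarith [hrel t]
  have hordP : OrdAt (a * ℓ) t₀ (n + 1) := hprod ▸
    hordβ.mul_right (hβc.contDiffAt_of_top _ _) ((hα.mul hx).contDiffAt_of_top _ _)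
      (mul_ne_zero hα0 hx0)
  have hmn : m ≤ n := by
    by_contra! hnm
    exact hordP.2 <| iteratedDeriv_mul_eq_zero_of_forall_lt (ha.contDiffAt_of_top _ _)
      (hl.contDiffAt_of_top _ _) horda.1 (by omega)
  have hfront : ℓ t₀ ≠ 0 ↔ m = n := by
    refine ⟨fun hℓ => ?_, fun heq => ?_⟩
    · have hord_eq := (horda.mul_right (ha.contDiffAt_of_top _ _) (hl.contDiffAt_of_top _ _) hℓ).eq hordP
      omega
    · subst heq
      intro hℓ
      apply hordP.2
      rw [iteratedDeriv_mul_eq_of_forall_lt (ha.contDiffAt_of_top _ _) (hl.contDiffAt_of_top _ _)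
        horda.1, hℓ, mul_zero]
  refine ⟨hmn, hfront, ?_⟩
  simp [Prod.ext_iff, hsing, hfront]

/-- Let `(γ, ν)` be a Legendre curve with `γ = (x, z)`, `ν = (a, b)`,
curvature `(ℓ, β)`, satisfying `ℓa = αβx` for a smooth function `α` (i.e. `K = αJ` for
the surface of revolution around the z-axis).  If `t₀` is a singular point of `γ`
(`β t₀ = 0`), `x t₀ ≠ 0`, `α t₀ ≠ 0`, `ord(a)(t₀) = m + 1` and `ord(β)(t₀) = n + 1`,
then `m ≤ n`, and `ℓ t₀ ≠ 0` (equivalently `(ℓ t₀, β t₀) ≠ (0, 0)`, i.e. `(γ, ν)` is a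
Legendre immersion at `t₀`, i.e. `γ` is a front at `t₀`) iff
`ord(a)(t₀) = ord(β)(t₀)`. -/
theorem front_condition_for_Gauss_curvature_ratio_curve
    (x z a b ℓ β α : ℝ → ℝ) (t₀ : ℝ) (m n : ℕ)
    (hx : ContDiff ℝ (⊤ : ℕ∞) x) (hz : ContDiff ℝ (⊤ : ℕ∞) z)
    (ha : ContDiff ℝ (⊤ : ℕ∞) a) (hb : ContDiff ℝ (⊤ : ℕ∞) b)
    (hl : ContDiff ℝ (⊤ : ℕ∞) ℓ) (hβc : ContDiff ℝ (⊤ : ℕ∞) β)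
    (hα : ContDiff ℝ (⊤ : ℕ∞) α)
    (hunit : ∀ t, a t ^ 2 + b t ^ 2 = 1)
    (hdx : ∀ t, deriv x t = -(β t) * b t)
    (hdz : ∀ t, deriv z t = β t * a t)
    (hda : ∀ t, deriv a t = -(ℓ t) * b t)
    (hdb : ∀ t, deriv b t = ℓ t * a t)
    -- K = α J : ℓ a = α β x
    (hrel : ∀ t, ℓ t * a t = α t * β t * x t)
    (hsing : β t₀ = 0) (hx0 : x t₀ ≠ 0) (hα0 : α t₀ ≠ 0)
    (horda : OrdAt a t₀ (m + 1)) (hordβ : OrdAt β t₀ (n + 1)) :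
    m ≤ n ∧
    (ℓ t₀ ≠ 0 ↔ m = n) ∧
    ((ℓ t₀, β t₀) ≠ ((0 : ℝ), (0 : ℝ)) ↔ m = n) :=
  front_condition_for_Gauss_curvature_ratio_curve_general x a ℓ β α t₀ m n hx ha hl hβc hα hrel
    hsing hx0 hα0 horda hordβ
end
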